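/- arXiv:math/0503327 — 2 statements merged into one kernel-verified Lean document; each statement's English description precedes it below -/
import Mathlib

section
/- For every positive integer m and every Dyck word w of length 2m, the number of matchings on [2m] with base w avoiding M_231 equals the number of Dyck words p of length 2m that do not exceed w; that is, g(m,w,M_231) = |D²_m(w)|. -/
/-- `G` is a matching on the vertex set `[n] = {1,…,n}`:
every edge has both endpoints in `[n]`, and every vertex of `[n]` has exactly one neighbour. -/
def IsMatchingOn (n : ℕ) (G : SimpleGraph ℕ) : Prop :=
  (∀ u v : ℕ, G.Adj u v → 1 ≤ u ∧ u ≤ n ∧ 1 ≤ v ∧ v ≤ n) ∧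
  (∀ v : ℕ, 1 ≤ v → v ≤ n → ∃! u : ℕ, G.Adj v u)

/-- `G` contains `H`: there is a monotone edge-preserving injection from the
vertices of `H` to those of `G`. -/
def ContainsPat (G H : SimpleGraph ℕ) : Prop :=
  ∃ f : ℕ → ℕ, StrictMono f ∧ ∀ u v : ℕ, H.Adj u v → G.Adj (f u) (f v)

/-- `w` (on positions `1,…,n`) is a Dyck word of length `n`: exactly half of its letters
are `1` (`true`), and every prefix has at most half of its letters equal to `1`. -/
def IsDyckWord (n : ℕ) (w : ℕ → Bool) : Prop :=
  2 * ((Finset.Icc 1 n).filter fun i => w i = true).card = n ∧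
  ∀ k : ℕ, k ≤ n → 2 * ((Finset.Icc 1 k).filter fun i => w i = true).card ≤ k

/-- The matching `G` on `[n]` has base `w`: `w i = 1` iff `i` is an r-vertex. -/
def HasBase (n : ℕ) (G : SimpleGraph ℕ) (w : ℕ → Bool) : Prop :=
  ∀ i : ℕ, 1 ≤ i → i ≤ n → (w i = true ↔ ∃ j : ℕ, j < i ∧ G.Adj i j)

/-- The matching `M_123` on `[6]`, with edges `{1,4},{2,5},{3,6}`. -/
def M123 : SimpleGraph ℕ := SimpleGraph.fromRel fun u v => (u, v) ∈ [(1,4),(2,5),(3,6)]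
/-- The matching `M_132` on `[6]`, with edges `{1,4},{2,6},{3,5}`. -/
def M132 : SimpleGraph ℕ := SimpleGraph.fromRel fun u v => (u, v) ∈ [(1,4),(2,6),(3,5)]
/-- The matching `M_213` on `[6]`, with edges `{1,5},{2,4},{3,6}`. -/
def M213 : SimpleGraph ℕ := SimpleGraph.fromRel fun u v => (u, v) ∈ [(1,5),(2,4),(3,6)]
/-- The matching `M_231` on `[6]`, with edges `{1,5},{2,6},{3,4}`. -/
def M231 : SimpleGraph ℕ := SimpleGraph.fromRel fun u v => (u, v) ∈ [(1,5),(2,6),(3,4)]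
/-- The matching `M_321` on `[6]`, with edges `{1,6},{2,5},{3,4}`. -/
def M321 : SimpleGraph ℕ := SimpleGraph.fromRel fun u v => (u, v) ∈ [(1,6),(2,5),(3,4)]

/-- The matching `C_k` on `[2k]`, with edges `{2i-1, 2i+2}` for `1 ≤ i < k`
together with the edge `{2, 2k-1}`. -/
def Ck (k : ℕ) : SimpleGraph ℕ :=
  SimpleGraph.fromRel fun u v =>
    (∃ i : ℕ, 1 ≤ i ∧ i < k ∧ u = 2*i - 1 ∧ v = 2*i + 2) ∨ (u = 2 ∧ v = 2*k - 1)

/-- `G[k]`: the subgraph of `G` induced by the vertex set `[k]`. -/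
def restrictG (G : SimpleGraph ℕ) (k : ℕ) : SimpleGraph ℕ :=
  SimpleGraph.fromRel fun u v => G.Adj u v ∧ u ≤ k ∧ v ≤ k

/-- A stub of a graph on `[k]`: an isolated vertex. -/
def IsStubOn (k : ℕ) (G : SimpleGraph ℕ) (v : ℕ) : Prop :=
  1 ≤ v ∧ v ≤ k ∧ ∀ u : ℕ, ¬ G.Adj v u

/-- The relation `∼`: `u ∼ v` iff `u = v` or some edge `{x,y}` satisfies
`x < u < y` and `x < v < y`. -/
def SimRel (G : SimpleGraph ℕ) (u v : ℕ) : Prop :=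
  u = v ∨ ∃ x y : ℕ, G.Adj x y ∧ x < u ∧ u < y ∧ x < v ∧ v < y

/-- The edges `{a,b}` and `{c,d}` (with `a < b`, `c < d`) cross. -/
def EdgesCross (a b c d : ℕ) : Prop :=
  (a < c ∧ c < b ∧ b < d) ∨ (c < a ∧ a < d ∧ d < b)

/-- The relation `≈`: `u ≈ v` iff `u = v` or there is a sequence of edges
`e_1,…,e_p` (`p ≥ 1`), consecutive ones crossing, with `e_1` spanning `u` and `e_p` spanning `v`. -/
def ApproxRel (G : SimpleGraph ℕ) (u v : ℕ) : Prop :=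
  u = v ∨ ∃ p : ℕ, 1 ≤ p ∧ ∃ x y : ℕ → ℕ,
    (∀ i : ℕ, i < p → x i < y i ∧ G.Adj (x i) (y i)) ∧
    (∀ i : ℕ, i + 1 < p → EdgesCross (x i) (y i) (x (i+1)) (y (i+1))) ∧
    x 0 < u ∧ u < y 0 ∧ x (p-1) < v ∧ v < y (p-1)

/-- `h_w(t)`: the number of `0`s minus the number of `1`s among the first `t` letters of `w`. -/
def heightAt (w : ℕ → Bool) (t : ℕ) : ℤ :=
  (((Finset.Icc 1 t).filter fun i => w i = false).card : ℤ) -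
  (((Finset.Icc 1 t).filter fun i => w i = true).card : ℤ)

/-- The Dyck word `p` does not exceed the Dyck word `w` (both of length `n`). -/
def DoesNotExceed (n : ℕ) (p w : ℕ → Bool) : Prop :=
  ∀ t : ℕ, t ≤ n → heightAt p t ≤ heightAt w t

/-- `a` is the position of the `i`-th letter `0` of `w`. -/
def IsNthZero (w : ℕ → Bool) (i a : ℕ) : Prop :=
  1 ≤ a ∧ w a = false ∧ ((Finset.Icc 1 a).filter fun j => w j = false).card = i

/-- `b` is the position of the `j`-th letter `1` of `w`. -/
def IsNthOne (w : ℕ → Bool) (j b : ℕ) : Prop :=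
  1 ≤ b ∧ w b = true ∧ ((Finset.Icc 1 b).filter fun t => w t = true).card = j

/-- The up-step at position `a` is partnered with the down-step at position `b` in `p`. -/
def Partnered (p : ℕ → Bool) (a b : ℕ) : Prop :=
  a < b ∧ heightAt p b = heightAt p (a - 1) ∧
  ∀ t : ℕ, a ≤ t → t < b → heightAt p (a - 1) < heightAt p t

/-- The graph `M(w,p)` on `[n]`: the position of the `i`-th `0` of `w` is joined to the
position of the `j`-th `1` of `w` whenever the `i`-th up-step of `p` is partnered with
the `j`-th down-step of `p`. -/
def Mwp (n : ℕ) (w p : ℕ → Bool) : SimpleGraph ℕ :=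
  SimpleGraph.fromRel fun u v => ∃ i j a b : ℕ,
    a ≤ n ∧ b ≤ n ∧ u ≤ n ∧ v ≤ n ∧
    IsNthZero p i a ∧ IsNthOne p j b ∧ Partnered p a b ∧
    IsNthZero w i u ∧ IsNthOne w j v


namespace Stmt18aux

/-- number of `true`s among positions `1..t`. -/
def cntT (q : ℕ → Bool) (t : ℕ) : ℕ := ((Finset.Icc 1 t).filter fun i => q i = true).card

lemma cntT_zero (q : ℕ → Bool) : cntT q 0 = 0 := by simp [cntT]

lemma cntT_succ (q : ℕ → Bool) (t : ℕ) :
    cntT q (t+1) = cntT q t + if q (t+1) = true then 1 else 0 := by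
  unfold cntT
  rw [← Finset.insert_Icc_right_eq_Icc_add_one (by omega : 1 ≤ t + 1)]
  rw [Finset.filter_insert]
  by_cases h : q (t+1) = true
  · rw [if_pos h, Finset.card_insert_of_notMem (by simp), if_pos h]
  · rw [if_neg h, if_neg h]; omega

lemma cntT_mono (q : ℕ → Bool) : Monotone (cntT q) := by
  apply monotone_nat_of_le_succ
  intro t; rw [cntT_succ]; omega

lemma cntT_le (q : ℕ → Bool) (t : ℕ) : cntT q t ≤ t := by
  induction t with
  | zero => rw [cntT_zero]
  | succ k ih =>
    rw [cntT_succ]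
    split <;> omega

lemma cntT_growth (q : ℕ → Bool) {s t : ℕ} (h : s ≤ t) : cntT q t ≤ cntT q s + (t - s) := by
  induction t with
  | zero =>
    have : s = 0 := by omega
    subst this
    simp
  | succ k ih =>
    rcases Nat.lt_or_ge s (k+1) with hs | hs
    · rw [cntT_succ]
      have := ih (by omega)
      split <;> omega
    · have : s = k+1 := by omega
      subst this; omega

lemma cntT_true {q : ℕ → Bool} {b : ℕ} (hb : 1 ≤ b) (h : q b = true) :
    cntT q b = cntT q (b-1) + 1 := by
  obtain ⟨k, rfl⟩ : ∃ k, b = k + 1 := ⟨b - 1, by omega⟩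
  rw [cntT_succ, if_pos h]; simp

lemma cntT_false {q : ℕ → Bool} {b : ℕ} (hb : 1 ≤ b) (h : q b = false) :
    cntT q b = cntT q (b-1) := by
  obtain ⟨k, rfl⟩ : ∃ k, b = k + 1 := ⟨b - 1, by omega⟩
  rw [cntT_succ, if_neg (by simp [h])]; simp

lemma cntT_pos {q : ℕ → Bool} {b : ℕ} (hb : 1 ≤ b) (h : q b = true) : 1 ≤ cntT q b := by
  rw [cntT_true hb h]; omega

/-- uniqueness of positions with given count. -/
lemma cnt_unique {q : ℕ → Bool} {b b' : ℕ} (hb : 1 ≤ b) (hb' : 1 ≤ b')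
    (h : q b = true) (h' : q b' = true) (hc : cntT q b = cntT q b') : b = b' := by
  by_contra hne
  rcases Nat.lt_or_ge b b' with hlt | hge
  · have h1 := cntT_true hb' h'
    have h2 := cntT_mono q (show b ≤ b' - 1 by omega)
    omega
  · have hlt : b' < b := by omega
    have h1 := cntT_true hb h
    have h2 := cntT_mono q (show b' ≤ b - 1 by omega)
    omega

/-- position of the `j`-th `true` of `q`. -/
noncomputable def nth (q : ℕ → Bool) (j : ℕ) : ℕ := sInf {b | q b = true ∧ cntT q b = j}

lemma nth_exists {q : ℕ → Bool} {j N : ℕ} (hj : 1 ≤ j) (hjN : j ≤ cntT q N) :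
    ∃ b, 1 ≤ b ∧ b ≤ N ∧ q b = true ∧ cntT q b = j := by
  have hex : ∃ t, j ≤ cntT q t := ⟨N, hjN⟩
  classical
  set b := Nat.find hex with hbdef
  have hble : b ≤ N := Nat.find_min' hex hjN
  have hb1 : j ≤ cntT q b := Nat.find_spec hex
  have hbpos : 1 ≤ b := by
    by_contra h
    have : b = 0 := by omega
    rw [this, cntT_zero] at hb1; omega
  have hb2 : cntT q (b-1) < j := by
    have := Nat.find_min hex (m := b - 1) (by omega)
    omega
  have hg := cntT_growth q (show b - 1 ≤ b by omega)
  have hcb : cntT q b = j := by omega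
  have hqb : q b = true := by
    by_contra h
    have := cntT_false hbpos (by simpa using h)
    omega
  exact ⟨b, hbpos, hble, hqb, hcb⟩

lemma nth_spec {q : ℕ → Bool} {j N : ℕ} (hj : 1 ≤ j) (hjN : j ≤ cntT q N) :
    1 ≤ nth q j ∧ nth q j ≤ N ∧ q (nth q j) = true ∧ cntT q (nth q j) = j := by
  obtain ⟨b, hb1, hbN, hqb, hcb⟩ := nth_exists hj hjN
  have hne : {b | q b = true ∧ cntT q b = j}.Nonempty := ⟨b, hqb, hcb⟩
  have hmem := Nat.sInf_mem hne
  have hmem' : q (nth q j) = true ∧ cntT q (nth q j) = j := hmem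
  have h1 : 1 ≤ nth q j := by
    by_contra h
    have h0 : nth q j = 0 := by omega
    have := hmem'.2
    rw [h0, cntT_zero] at this
    omega
  have heq : nth q j = b := cnt_unique h1 hb1 hmem'.1 hqb (by rw [hmem'.2, hcb])
  exact ⟨h1, by omega, hmem'.1, hmem'.2⟩

lemma nth_cnt {q : ℕ → Bool} {b : ℕ} (hb : 1 ≤ b) (h : q b = true) :
    nth q (cntT q b) = b := by
  have hj : 1 ≤ cntT q b := cntT_pos hb h
  obtain ⟨h1, _, hq, hc⟩ := nth_spec (q := q) hj (le_refl _)
  exact cnt_unique h1 hb hq h hc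

lemma nth_le {q : ℕ → Bool} {j t : ℕ} (hj : 1 ≤ j) (h : j ≤ cntT q t) : nth q j ≤ t :=
  (nth_spec hj h).2.1

lemma nth_lt_nth {q : ℕ → Bool} {j j' N : ℕ} (hj : 1 ≤ j) (hjj : j < j')
    (hN : j' ≤ cntT q N) : nth q j < nth q j' := by
  obtain ⟨h1, _, hq, hc⟩ := nth_spec hj (le_trans (by omega) hN)
  obtain ⟨h1', _, hq', hc'⟩ := nth_spec (show 1 ≤ j' by omega) hN
  by_contra h
  have := cntT_mono q (show nth q j' ≤ nth q j by omega)
  omega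

lemma nth_growth {q : ℕ → Bool} {j j' N : ℕ} (hj : 1 ≤ j) (hjj : j ≤ j')
    (hN : j' ≤ cntT q N) : nth q j + (j' - j) ≤ nth q j' := by
  obtain ⟨h1, _, hq, hc⟩ := nth_spec hj (le_trans (by omega) hN)
  obtain ⟨h1', _, hq', hc'⟩ := nth_spec (show 1 ≤ j' by omega) hN
  have hle : nth q j ≤ nth q j' := by
    rcases Nat.eq_or_lt_of_le hjj with rfl | hlt
    · omega
    · exact le_of_lt (nth_lt_nth hj hlt hN)
  have := cntT_growth q hle
  omega


/-! ### Bridges to the statement's definitions -/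

lemma cnt_add (q : ℕ → Bool) (t : ℕ) :
    cntT q t + ((Finset.Icc 1 t).filter fun i => q i = false).card = t := by
  have h := Finset.card_filter_add_card_filter_not
    (s := Finset.Icc 1 t) (p := fun i => q i = true)
  have h2 : (Finset.filter (fun i => ¬ q i = true) (Finset.Icc 1 t))
      = (Finset.filter (fun i => q i = false) (Finset.Icc 1 t)) := by
    apply Finset.filter_congr
    intro i _
    simp
  rw [h2] at h
  simpa [cntT, Nat.card_Icc] using h

lemma heightAt_eq (q : ℕ → Bool) (t : ℕ) :
    ((((Finset.Icc 1 t).filter fun i => q i = false).card : ℤ) -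
      (((Finset.Icc 1 t).filter fun i => q i = true).card : ℤ))
    = (t : ℤ) - 2 * cntT q t := by
  have := cnt_add q t
  have : (cntT q t : ℤ) + (((Finset.Icc 1 t).filter fun i => q i = false).card : ℤ) = t := by
    exact_mod_cast this
  unfold cntT at *
  omega

/-! ### Facts about the fixed Dyck word `w` -/

section Fixed

variable {m : ℕ} {w : ℕ → Bool}

/-- `cntT w (2*m) = m` for a Dyck word. -/
lemma dyck_total (hw : 2 * cntT w (2*m) = 2*m) : cntT w (2*m) = m := by omega

lemma nth_ub (hm : 1 ≤ m) (htot : cntT w (2*m) = m) {j : ℕ} (hj : 1 ≤ j) (hjm : j ≤ m) :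
    nth w j ≤ m + j := by
  obtain ⟨h1, h2, h3, h4⟩ := nth_spec (q := w) hj (htot ▸ hjm)
  -- number of falses up to nth w j is nth w j - j; it is at most m
  have hfadd := cnt_add w (nth w j)
  have hfaddn := cnt_add w (2*m)
  have hmono : ((Finset.Icc 1 (nth w j)).filter fun i => w i = false).card ≤
      ((Finset.Icc 1 (2*m)).filter fun i => w i = false).card := by
    apply Finset.card_le_card
    apply Finset.filter_subset_filter
    apply Finset.Icc_subset_Icc_right h2
  omega

lemma nth_lb (hpre : ∀ k : ℕ, k ≤ 2*m → 2 * cntT w k ≤ k) (htot : cntT w (2*m) = m)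
    {j : ℕ} (hj : 1 ≤ j) (hjm : j ≤ m) : 2 * j ≤ nth w j := by
  obtain ⟨h1, h2, h3, h4⟩ := nth_spec (q := w) hj (htot ▸ hjm)
  have := hpre (nth w j) h2
  omega

end Fixed

/-! ### The middle type `D`: staircase sequences -/

/-- `DP m w d`: `d` is a normalized nondecreasing sequence with `j ≤ d j` and
`d j + j ≤ nth w j` on `[1,m]`. -/
def DP (m : ℕ) (w : ℕ → Bool) (d : ℕ → ℕ) : Prop :=
  (∀ j, j ∉ Finset.Icc 1 m → d j = 0) ∧
  (∀ j ∈ Finset.Icc 1 m, ∀ j' ∈ Finset.Icc 1 m, j ≤ j' → d j ≤ d j') ∧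
  (∀ j ∈ Finset.Icc 1 m, j ≤ d j ∧ d j + j ≤ nth w j)

/-! ### From sequences to Dyck words and back -/

/-- the word whose `j`-th one is at position `d j + j`. -/
def toP (m : ℕ) (d : ℕ → ℕ) (i : ℕ) : Bool :=
  decide (i ∈ (Finset.Icc 1 m).image (fun j => d j + j))

/-- the staircase sequence of a word `p`. -/
noncomputable def toD (m : ℕ) (p : ℕ → Bool) (j : ℕ) : ℕ :=
  if j ∈ Finset.Icc 1 m then nth p j - j else 0

section Bside

variable {m : ℕ} {w : ℕ → Bool}

lemma psi_strictmono {d : ℕ → ℕ} (hd : DP m w d) {j j' : ℕ} (hj : j ∈ Finset.Icc 1 m)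
    (hj' : j' ∈ Finset.Icc 1 m) (h : j < j') : d j + j < d j' + j' := by
  have := hd.2.1 j hj j' hj' (le_of_lt h)
  omega

lemma toP_cnt {d : ℕ → ℕ} (hd : DP m w d) (t : ℕ) :
    cntT (toP m d) t = ((Finset.Icc 1 m).filter fun j => d j + j ≤ t).card := by
  unfold cntT
  symm
  apply Finset.card_bij (fun j _ => d j + j)
  · intro j hj
    simp only [Finset.mem_filter] at hj ⊢
    simp only [Finset.mem_Icc] at hj ⊢
    refine ⟨⟨?_, hj.2⟩, ?_⟩
    · have := (hd.2.2 j (by simp only [Finset.mem_Icc]; omega)).1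
      omega
    · unfold toP
      simp only [decide_eq_true_eq, Finset.mem_image, Finset.mem_Icc]
      exact ⟨j, by omega, rfl⟩
  · intro j1 h1 j2 h2 heq
    simp only [Finset.mem_filter] at h1 h2
    by_contra hne
    rcases Nat.lt_or_ge j1 j2 with h | h
    · have := psi_strictmono hd h1.1 h2.1 h; omega
    · have hlt : j2 < j1 := by omega
      have := psi_strictmono hd h2.1 h1.1 hlt; omega
  · intro i hi
    simp only [Finset.mem_filter, Finset.mem_Icc] at hi
    obtain ⟨⟨hi1, hi2⟩, hp⟩ := hi
    unfold toP at hp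
    simp only [decide_eq_true_eq, Finset.mem_image, Finset.mem_Icc] at hp
    obtain ⟨j, hj, hji⟩ := hp
    exact ⟨j, by simp only [Finset.mem_filter, Finset.mem_Icc]; omega, hji⟩

lemma toP_nth {d : ℕ → ℕ} (hd : DP m w d) {j : ℕ} (hj : j ∈ Finset.Icc 1 m) :
    nth (toP m d) j = d j + j := by
  simp only [Finset.mem_Icc] at hj
  have hmem : toP m d (d j + j) = true := by
    unfold toP
    simp only [decide_eq_true_eq, Finset.mem_image, Finset.mem_Icc]
    exact ⟨j, by omega, rfl⟩
  have hcnt : cntT (toP m d) (d j + j) = j := by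
    rw [toP_cnt hd]
    have : ((Finset.Icc 1 m).filter fun j' => d j' + j' ≤ d j + j) = Finset.Icc 1 j := by
      apply Finset.ext
      intro j'
      simp only [Finset.mem_filter, Finset.mem_Icc]
      constructor
      · rintro ⟨⟨ha, hb⟩, hc⟩
        refine ⟨ha, ?_⟩
        by_contra hgt
        have := psi_strictmono hd (by simp [Finset.mem_Icc]; omega)
          (by simp [Finset.mem_Icc]; omega) (show j < j' by omega)
        omega
      · rintro ⟨ha, hb⟩
        refine ⟨⟨ha, by omega⟩, ?_⟩
        rcases Nat.eq_or_lt_of_le hb with rfl | hlt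
        · omega
        · have := psi_strictmono hd (by simp [Finset.mem_Icc]; omega)
            (by simp [Finset.mem_Icc]; omega) hlt
          omega
    rw [this, Nat.card_Icc]
    omega
  have := nth_cnt (q := toP m d) (b := d j + j) (by
    have := (hd.2.2 j (by simp [Finset.mem_Icc]; omega)).1
    omega) hmem
  rw [hcnt] at this
  exact this

lemma toP_total (hm : 1 ≤ m) (htot : cntT w (2*m) = m) {d : ℕ → ℕ} (hd : DP m w d) :
    cntT (toP m d) (2*m) = m := by
  rw [toP_cnt hd]
  have : ((Finset.Icc 1 m).filter fun j => d j + j ≤ 2*m) = Finset.Icc 1 m := by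
    apply Finset.filter_true_of_mem
    intro j hj
    have h1 := (hd.2.2 j hj).2
    simp only [Finset.mem_Icc] at hj
    have h2 := nth_ub hm htot (show 1 ≤ j by omega) (show j ≤ m by omega)
    omega
  rw [this, Nat.card_Icc]
  omega
lemma toP_prefix {d : ℕ → ℕ} (hd : DP m w d) (k : ℕ) : 2 * cntT (toP m d) k ≤ k := by
  rw [toP_cnt hd]
  set s := (Finset.Icc 1 m).filter fun j => d j + j ≤ k with hs
  rcases Finset.eq_empty_or_nonempty s with he | hne
  · rw [he]; simp
  · set jx := s.max' hne with hjx
    have hmem : jx ∈ s := Finset.max'_mem s hne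
    have hsub : s ⊆ Finset.Icc 1 jx := by
      intro x hx
      simp only [Finset.mem_Icc]
      have h1 : x ≤ jx := Finset.le_max' s x hx
      simp only [hs, Finset.mem_filter, Finset.mem_Icc] at hx
      omega
    have hcard : s.card ≤ jx := by
      have := Finset.card_le_card hsub
      rw [Nat.card_Icc] at this
      omega
    simp only [hs, Finset.mem_filter, Finset.mem_Icc] at hmem
    have := (hd.2.2 jx (by simp only [Finset.mem_Icc]; omega)).1
    omega

lemma toP_isDyck (hm : 1 ≤ m) (htot : cntT w (2*m) = m) {d : ℕ → ℕ} (hd : DP m w d) :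
    IsDyckWord (2*m) (toP m d) := by
  constructor
  · have := toP_total hm htot hd
    unfold cntT at this
    omega
  · intro k _
    have := toP_prefix hd k
    unfold cntT at this
    omega

lemma toP_norm {d : ℕ → ℕ} (hd : DP m w d) (htot : cntT w (2*m) = m) (hm : 1 ≤ m)
    (i : ℕ) (hi : i = 0 ∨ 2*m < i) : toP m d i = false := by
  unfold toP
  simp only [decide_eq_false_iff_not, Finset.mem_image, Finset.mem_Icc]
  rintro ⟨j, hj, hji⟩
  have h1 := (hd.2.2 j (by simp only [Finset.mem_Icc]; omega)).2
  have h2 := nth_ub hm htot (show 1 ≤ j by omega) (show j ≤ m by omega)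
  omega

lemma height_le_iff (p q : ℕ → Bool) (t : ℕ) :
    ((((Finset.Icc 1 t).filter fun i => p i = false).card : ℤ) -
      (((Finset.Icc 1 t).filter fun i => p i = true).card : ℤ)) ≤
    ((((Finset.Icc 1 t).filter fun i => q i = false).card : ℤ) -
      (((Finset.Icc 1 t).filter fun i => q i = true).card : ℤ)) ↔
    cntT q t ≤ cntT p t := by
  rw [heightAt_eq, heightAt_eq]
  omega

lemma toP_notexceed (htot : cntT w (2*m) = m) {d : ℕ → ℕ} (hd : DP m w d) :
    DoesNotExceed (2*m) (toP m d) w := by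
  intro t ht
  unfold heightAt
  rw [height_le_iff]
  rw [toP_cnt hd]
  set k := cntT w t with hk
  have hkm : k ≤ m := by rw [hk, ← htot]; exact cntT_mono w ht
  rcases Nat.eq_zero_or_pos k with h0 | hpos
  · omega
  · have hsub : Finset.Icc 1 k ⊆ (Finset.Icc 1 m).filter fun j => d j + j ≤ t := by
      intro j hj
      simp only [Finset.mem_Icc] at hj
      simp only [Finset.mem_filter, Finset.mem_Icc]
      refine ⟨⟨hj.1, by omega⟩, ?_⟩
      have h1 := (hd.2.2 j (by simp only [Finset.mem_Icc]; omega)).2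
      have h2 : nth w j ≤ t := nth_le hj.1 (by omega)
      omega
    have := Finset.card_le_card hsub
    rw [Nat.card_Icc] at this
    omega

lemma toD_DP (hm : 1 ≤ m) (htotw : cntT w (2*m) = m) {p : ℕ → Bool}
    (hp : IsDyckWord (2*m) p) (hle : DoesNotExceed (2*m) p w) : DP m w (toD m p) := by
  have htot : cntT p (2*m) = m := by
    have := hp.1; unfold cntT; omega
  have hpre : ∀ k : ℕ, k ≤ 2*m → 2 * cntT p k ≤ k := by
    intro k hk; have := hp.2 k hk; unfold cntT; omega
  refine ⟨fun j hj => by simp [toD, hj], ?_, ?_⟩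
  · intro j hj j' hj' hle'
    simp only [toD, if_pos hj, if_pos hj']
    simp only [Finset.mem_Icc] at hj hj'
    have := nth_growth (q := p) hj.1 hle' (show j' ≤ cntT p (2*m) by rw [htot]; exact hj'.2)
    have h1 := nth_lb hpre htot hj.1 hj.2
    omega
  · intro j hj
    simp only [toD, if_pos hj]
    simp only [Finset.mem_Icc] at hj
    have h1 := nth_lb hpre htot hj.1 hj.2
    constructor
    · omega
    · -- nth p j ≤ nth w j
      have hsp := nth_spec (q := w) hj.1 (show j ≤ cntT w (2*m) by rw [htotw]; exact hj.2)
      have hcnt : cntT w (nth w j) = j := hsp.2.2.2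
      have hwn : nth w j ≤ 2*m := hsp.2.1
      have hdom := hle (nth w j) hwn
      unfold heightAt at hdom
      rw [height_le_iff] at hdom
      have : nth p j ≤ nth w j := nth_le hj.1 (by omega)
      omega

lemma toD_toP {d : ℕ → ℕ} (hd : DP m w d) : toD m (toP m d) = d := by
  funext j
  by_cases hj : j ∈ Finset.Icc 1 m
  · simp only [toD, if_pos hj]
    rw [toP_nth hd hj]
    omega
  · simp only [toD, if_neg hj]
    exact (hd.1 j hj).symm

lemma toP_toD (hm : 1 ≤ m) (htotw : cntT w (2*m) = m) {p : ℕ → Bool}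
    (hp : IsDyckWord (2*m) p) (hle : DoesNotExceed (2*m) p w)
    (hnorm : ∀ i : ℕ, (i = 0 ∨ 2*m < i) → p i = false) : toP m (toD m p) = p := by
  have htot : cntT p (2*m) = m := by
    have := hp.1; unfold cntT; omega
  funext i
  unfold toP
  by_cases hp' : p i = true
  · have hi1 : 1 ≤ i := by
      by_contra h
      have : i = 0 := by omega
      rw [hnorm i (Or.inl this)] at hp'; simp at hp'
    have hi2 : i ≤ 2*m := by
      by_contra h
      rw [hnorm i (Or.inr (by omega))] at hp'; simp at hp'
    have hj : cntT p i ∈ Finset.Icc 1 m := by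
      simp only [Finset.mem_Icc]
      exact ⟨cntT_pos hi1 hp', htot ▸ cntT_mono p hi2⟩
    rw [hp']
    simp only [decide_eq_true_eq, Finset.mem_image]
    refine ⟨cntT p i, hj, ?_⟩
    simp only [toD, if_pos hj]
    have h0 := nth_cnt hi1 hp'
    have h2 := cntT_le p i
    omega
  · have hfalse : p i = false := by
      revert hp'; cases p i <;> simp
    rw [hfalse]
    simp only [decide_eq_false_iff_not, Finset.mem_image]
    rintro ⟨j, hj, hji⟩
    simp only [toD, if_pos hj] at hji
    simp only [Finset.mem_Icc] at hj
    obtain ⟨hn1, hn2, hn3, hn4⟩ := nth_spec (q := p) hj.1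
      (show j ≤ cntT p (2*m) by rw [htot]; exact hj.2)
    have hle' := cntT_le p (nth p j)
    have : i = nth p j := by omega
    rw [this, hn3] at hfalse
    simp at hfalse
lemma cardB (hm : 1 ≤ m) (hw : IsDyckWord (2*m) w) :
    Nat.card {p : ℕ → Bool // IsDyckWord (2*m) p ∧ DoesNotExceed (2*m) p w ∧
      ∀ i : ℕ, (i = 0 ∨ 2*m < i) → p i = false} = Nat.card {d : ℕ → ℕ // DP m w d} := by
  have htot : cntT w (2*m) = m := by have := hw.1; unfold cntT; omega
  apply Nat.card_congr
  refine ⟨fun x => ⟨toD m x.1, toD_DP hm htot x.2.1 x.2.2.1⟩,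
    fun y => ⟨toP m y.1, toP_isDyck hm htot y.2, toP_notexceed htot y.2,
      toP_norm y.2 htot hm⟩, ?_, ?_⟩
  · rintro ⟨p, hp⟩
    exact Subtype.ext (toP_toD hm htot hp.1 hp.2.1 hp.2.2)
  · rintro ⟨d, hd⟩
    exact Subtype.ext (toD_toP hd)

end Bside

/-! ### The permutation type `S` and the bijection with `D` -/

/-- `SP m w σ`: normalized 312-avoiding bijection of `[1,m]` with `σ j + j ≤ nth w j`. -/
def SP (m : ℕ) (w : ℕ → Bool) (σ : ℕ → ℕ) : Prop :=
  (∀ j, j ∉ Finset.Icc 1 m → σ j = 0) ∧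
  (∀ j ∈ Finset.Icc 1 m, 1 ≤ σ j ∧ σ j + j ≤ nth w j) ∧
  Set.InjOn σ (Finset.Icc 1 m) ∧
  ¬ ∃ j1 j2 j3 : ℕ, j1 ∈ Finset.Icc 1 m ∧ j3 ∈ Finset.Icc 1 m ∧ j1 < j2 ∧ j2 < j3 ∧
    σ j2 < σ j3 ∧ σ j3 < σ j1

/-- running maximum of `σ` over `[1,j]`, normalized. -/
def runmax (m : ℕ) (σ : ℕ → ℕ) (j : ℕ) : ℕ :=
  if j ∈ Finset.Icc 1 m then (Finset.Icc 1 j).sup σ else 0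

/-- the set of values used by the inverse construction after `j` steps. -/
noncomputable def usedSet (d : ℕ → ℕ) : ℕ → Finset ℕ
  | 0 => ∅
  | j+1 => insert ((((Finset.Icc 1 (d (j+1))) \ usedSet d j).max).getD 0) (usedSet d j)

/-- the inverse construction: the 312-avoiding permutation with running maximum `d`. -/
noncomputable def invs (m : ℕ) (d : ℕ → ℕ) (j : ℕ) : ℕ :=
  if j ∈ Finset.Icc 1 m then (((Finset.Icc 1 (d j)) \ usedSet d (j-1)).max).getD 0 else 0

section Cside

variable {m : ℕ} {w : ℕ → Bool}

lemma usedSet_succ (d : ℕ → ℕ) (j : ℕ) :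
    usedSet d (j+1) = insert ((((Finset.Icc 1 (d (j+1))) \ usedSet d j).max).getD 0)
      (usedSet d j) := by
  rfl

lemma usedSet_mono (d : ℕ → ℕ) : Monotone (usedSet d) := by
  apply monotone_nat_of_le_succ
  intro j
  rw [usedSet_succ]
  exact Finset.subset_insert _ _

/-- basic invariant of the construction. -/
lemma usedSet_inv {d : ℕ → ℕ} (hd : DP m w d) :
    ∀ j, j ≤ m → usedSet d j ⊆ Finset.Icc 1 (d j) ∧ (usedSet d j).card = j ∧
      (1 ≤ j → d j ∈ usedSet d j) := by
  intro j
  induction j with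
  | zero =>
    intro _
    refine ⟨by simp [usedSet], by simp [usedSet], by omega⟩
  | succ k ih =>
    intro hk
    obtain ⟨ih1, ih2, ih3⟩ := ih (by omega)
    have hk1 : k + 1 ∈ Finset.Icc 1 m := by simp only [Finset.mem_Icc]; omega
    have hdmono : d k ≤ d (k+1) := by
      rcases Nat.eq_zero_or_pos k with rfl | hkpos
      · have := hd.1 0 (by simp)
        omega
      · exact hd.2.1 k (by simp only [Finset.mem_Icc]; omega) (k+1) hk1 (by omega)
    have hdk1 : k + 1 ≤ d (k+1) := (hd.2.2 (k+1) hk1).1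
    -- the set we pick from is nonempty
    have hsub : usedSet d k ⊆ Finset.Icc 1 (d (k+1)) :=
      subset_trans ih1 (Finset.Icc_subset_Icc_right hdmono)
    have hcard : (Finset.Icc 1 (d (k+1)) \ usedSet d k).card = d (k+1) - k := by
      rw [Finset.card_sdiff_of_subset hsub, Nat.card_Icc, ih2]
      omega
    have hne : (Finset.Icc 1 (d (k+1)) \ usedSet d k).Nonempty := by
      rw [← Finset.card_pos, hcard]
      omega
    obtain ⟨v, hv⟩ := Finset.max_of_nonempty hne
    have hvval : (((Finset.Icc 1 (d (k+1))) \ usedSet d k).max).getD 0 = v := by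
      rw [hv]; rfl
    have hvmem : v ∈ Finset.Icc 1 (d (k+1)) \ usedSet d k := Finset.mem_of_max hv
    rw [Finset.mem_sdiff] at hvmem
    refine ⟨?_, ?_, ?_⟩
    · rw [usedSet_succ, hvval]
      intro x hx
      rcases Finset.mem_insert.1 hx with rfl | hx'
      · exact hvmem.1
      · exact hsub hx'
    · rw [usedSet_succ, hvval, Finset.card_insert_of_notMem hvmem.2, ih2]
    · intro _
      rw [usedSet_succ, hvval]
      rcases Nat.lt_or_ge (d k) (d (k+1)) with hlt | hge
      · have : v = d (k+1) := by
          have h1 : v ≤ d (k+1) := by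
            have := hvmem.1; simp only [Finset.mem_Icc] at this; omega
          have h2 : d (k+1) ≤ v := by
            apply Finset.le_max_of_eq _ hv
            rw [Finset.mem_sdiff]
            refine ⟨by simp only [Finset.mem_Icc]; omega, ?_⟩
            intro hmem
            have := ih1 hmem
            simp only [Finset.mem_Icc] at this
            omega
          omega
        rw [this]
        exact Finset.mem_insert_self _ _
      · have hdeq : d (k+1) = d k := by omega
        have hkpos : 1 ≤ k := by
          by_contra h
          have : k = 0 := by omega
          subst this
          have := hd.1 0 (by simp)
          omega
        apply Finset.mem_insert_of_mem
        rw [hdeq]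
        exact ih3 hkpos

lemma pick_spec {d : ℕ → ℕ} (hd : DP m w d) {j : ℕ} (hj1 : 1 ≤ j) (hjm : j ≤ m) :
    invs m d j ∈ Finset.Icc 1 (d j) \ usedSet d (j-1) ∧
    (∀ x ∈ Finset.Icc 1 (d j) \ usedSet d (j-1), x ≤ invs m d j) ∧
    usedSet d j = insert (invs m d j) (usedSet d (j-1)) := by
  obtain ⟨k, rfl⟩ : ∃ k, j = k + 1 := ⟨j - 1, by omega⟩
  obtain ⟨ih1, ih2, _⟩ := usedSet_inv hd k (by omega)
  have hdmono : d k ≤ d (k+1) := by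
    rcases Nat.eq_zero_or_pos k with rfl | hkpos
    · have := hd.1 0 (by simp); omega
    · exact hd.2.1 k (by simp only [Finset.mem_Icc]; omega)
        (k+1) (by simp only [Finset.mem_Icc]; omega) (by omega)
  have hdk1 : k + 1 ≤ d (k+1) := (hd.2.2 (k+1) (by simp only [Finset.mem_Icc]; omega)).1
  have hsub : usedSet d k ⊆ Finset.Icc 1 (d (k+1)) :=
    subset_trans ih1 (Finset.Icc_subset_Icc_right hdmono)
  have hcard : (Finset.Icc 1 (d (k+1)) \ usedSet d k).card = d (k+1) - k := by
    rw [Finset.card_sdiff_of_subset hsub, Nat.card_Icc, ih2]; omega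
  have hne : (Finset.Icc 1 (d (k+1)) \ usedSet d k).Nonempty := by
    rw [← Finset.card_pos, hcard]; omega
  obtain ⟨v, hv⟩ := Finset.max_of_nonempty hne
  have hinvs : invs m d (k+1) = v := by
    unfold invs
    rw [if_pos (by simp only [Finset.mem_Icc]; omega)]
    simp only [Nat.add_sub_cancel]
    rw [hv]; rfl
  simp only [Nat.add_sub_cancel]
  rw [hinvs]
  refine ⟨Finset.mem_of_max hv, ?_, ?_⟩
  · intro x hx
    exact Finset.le_max_of_eq hx hv
  · rw [usedSet_succ]
    congr 1
    rw [hv]; rfl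

lemma usedSet_eq_image {d : ℕ → ℕ} (hd : DP m w d) :
    ∀ j, j ≤ m → usedSet d j = (Finset.Icc 1 j).image (invs m d) := by
  intro j
  induction j with
  | zero => intro _; simp [usedSet]
  | succ k ih =>
    intro hk
    obtain ⟨_, _, h3⟩ := pick_spec hd (show 1 ≤ k+1 by omega) hk
    simp only [Nat.add_sub_cancel] at h3
    rw [h3, ih (by omega), ← Finset.insert_Icc_right_eq_Icc_add_one (by omega : 1 ≤ k + 1),
      Finset.image_insert]

lemma invs_mem {d : ℕ → ℕ} (hd : DP m w d) {j : ℕ} (hj1 : 1 ≤ j) (hjm : j ≤ m) :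
    1 ≤ invs m d j ∧ invs m d j ≤ d j ∧ invs m d j ∉ usedSet d (j-1) := by
  have h := (pick_spec hd hj1 hjm).1
  rw [Finset.mem_sdiff, Finset.mem_Icc] at h
  exact ⟨h.1.1, h.1.2, h.2⟩

lemma invs_SP (hm : 1 ≤ m) (htot : cntT w (2*m) = m) {d : ℕ → ℕ} (hd : DP m w d) :
    SP m w (invs m d) := by
  refine ⟨fun j hj => by simp [invs, hj], ?_, ?_, ?_⟩
  · intro j hj
    simp only [Finset.mem_Icc] at hj
    obtain ⟨h1, h2, _⟩ := invs_mem hd hj.1 hj.2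
    have h3 := (hd.2.2 j (by simp only [Finset.mem_Icc]; omega)).2
    omega
  · have key : ∀ a b : ℕ, 1 ≤ a → a ≤ m → 1 ≤ b → b ≤ m → a < b →
        invs m d a ≠ invs m d b := by
      intro a b ha1 ham hb1 hbm hab heq
      have h1 : invs m d a ∈ usedSet d a := by
        have := (pick_spec hd ha1 ham).2.2
        rw [this]
        exact Finset.mem_insert_self _ _
      have h2 : invs m d b ∉ usedSet d (b-1) := (invs_mem hd hb1 hbm).2.2
      rw [heq] at h1
      exact h2 (usedSet_mono d (show a ≤ b - 1 by omega) h1)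
    intro j hj j' hj' heq
    simp only [Finset.coe_Icc, Set.mem_Icc] at hj hj'
    by_contra hne
    rcases Nat.lt_or_ge j j' with hlt | hge
    · exact key j j' hj.1 hj.2 hj'.1 hj'.2 hlt heq
    · exact key j' j hj'.1 hj'.2 hj.1 hj.2 (by omega) heq.symm
  · rintro ⟨j1, j2, j3, hj1, hj3, h12, h23, hlt1, hlt2⟩
    simp only [Finset.mem_Icc] at hj1 hj3
    have hj2m : 1 ≤ j2 ∧ j2 ≤ m := by omega
    have hx3 : invs m d j3 ∉ usedSet d (j3 - 1) := (invs_mem hd (by omega) hj3.2).2.2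
    have hx3' : invs m d j3 ∉ usedSet d (j2 - 1) := fun h =>
      hx3 (usedSet_mono d (show j2 - 1 ≤ j3 - 1 by omega) h)
    have hd12 : d j1 ≤ d j2 := hd.2.1 j1 (by simp only [Finset.mem_Icc]; omega)
      j2 (by simp only [Finset.mem_Icc]; omega) (by omega)
    have hb1 : invs m d j1 ≤ d j1 := (invs_mem hd hj1.1 hj1.2).2.1
    have hb3 : 1 ≤ invs m d j3 := (invs_mem hd (by omega) hj3.2).1
    have hmem : invs m d j3 ∈ Finset.Icc 1 (d j2) \ usedSet d (j2 - 1) := by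
      rw [Finset.mem_sdiff, Finset.mem_Icc]
      exact ⟨⟨hb3, by omega⟩, hx3'⟩
    have := (pick_spec hd hj2m.1 hj2m.2).2.1 _ hmem
    omega

lemma runmax_invs {d : ℕ → ℕ} (hd : DP m w d) : runmax m (invs m d) = d := by
  funext j
  by_cases hj : j ∈ Finset.Icc 1 m
  · simp only [runmax, if_pos hj]
    simp only [Finset.mem_Icc] at hj
    apply le_antisymm
    · apply Finset.sup_le
      intro i hi
      simp only [Finset.mem_Icc] at hi
      have h1 := (invs_mem hd hi.1 (by omega)).2.1
      have h2 : d i ≤ d j := hd.2.1 i (by simp only [Finset.mem_Icc]; omega)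
        j (by simp only [Finset.mem_Icc]; omega) hi.2
      omega
    · have hmem := (usedSet_inv hd j hj.2).2.2 hj.1
      rw [usedSet_eq_image hd j hj.2] at hmem
      obtain ⟨i, hi, hieq⟩ := Finset.mem_image.1 hmem
      rw [← hieq]
      exact Finset.le_sup hi
  · simp only [runmax, if_neg hj]
    exact (hd.1 j hj).symm

lemma runmax_DP (hm : 1 ≤ m) (htot : cntT w (2*m) = m) {σ : ℕ → ℕ} (hσ : SP m w σ) :
    DP m w (runmax m σ) := by
  refine ⟨fun j hj => by simp [runmax, hj], ?_, ?_⟩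
  · intro j hj j' hj' hle
    simp only [runmax, if_pos hj, if_pos hj']
    exact Finset.sup_mono (Finset.Icc_subset_Icc_right hle)
  · intro j hj
    simp only [runmax, if_pos hj]
    simp only [Finset.mem_Icc] at hj
    constructor
    · -- j ≤ sup
      have himg : (Finset.Icc 1 j).image σ ⊆ Finset.Icc 1 ((Finset.Icc 1 j).sup σ) := by
        intro x hx
        obtain ⟨i, hi, hieq⟩ := Finset.mem_image.1 hx
        have hi' : 1 ≤ i ∧ i ≤ j := by simpa only [Finset.mem_Icc] using hi
        simp only [Finset.mem_Icc]
        constructor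
        · rw [← hieq]
          exact (hσ.2.1 i (by simp only [Finset.mem_Icc]; omega)).1
        · rw [← hieq]; exact Finset.le_sup hi
      have hcard : ((Finset.Icc 1 j).image σ).card = j := by
        rw [Finset.card_image_of_injOn, Nat.card_Icc]
        · omega
        · intro a ha b hb hab
          apply hσ.2.2.1 _ _ hab <;>
          · simp only [Finset.coe_Icc, Set.mem_Icc] at *
            omega
      have := Finset.card_le_card himg
      rw [hcard, Nat.card_Icc] at this
      omega
    · -- sup + j ≤ nth w j
      have hjnth : j ≤ nth w j := by
        have := (nth_spec hj.1 (show j ≤ cntT w (2*m) by rw [htot]; exact hj.2)).2.2.2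
        have := cntT_le w (nth w j)
        omega
      have hsup : (Finset.Icc 1 j).sup σ ≤ nth w j - j := by
        apply Finset.sup_le
        intro i hi
        simp only [Finset.mem_Icc] at hi
        have h1 := (hσ.2.1 i (by simp only [Finset.mem_Icc]; omega)).2
        have h2 : nth w i + (j - i) ≤ nth w j :=
          nth_growth hi.1 hi.2 (show j ≤ cntT w (2*m) by rw [htot]; exact hj.2)
        omega
      omega

lemma SP_surj (hm : 1 ≤ m) (htot : cntT w (2*m) = m) {σ : ℕ → ℕ} (hσ : SP m w σ) :
    (Finset.Icc 1 m).image σ = Finset.Icc 1 m := by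
  apply Finset.eq_of_subset_of_card_le
  · intro x hx
    obtain ⟨i, hi, hieq⟩ := Finset.mem_image.1 hx
    have h1 := (hσ.2.1 i hi).1
    have h2 := (hσ.2.1 i hi).2
    simp only [Finset.mem_Icc] at hi ⊢
    have h3 := nth_ub hm htot hi.1 hi.2
    omega
  · rw [Finset.card_image_of_injOn hσ.2.2.1]

lemma invs_runmax (hm : 1 ≤ m) (htot : cntT w (2*m) = m) {σ : ℕ → ℕ} (hσ : SP m w σ) :
    invs m (runmax m σ) = σ := by
  set d := runmax m σ with hddef
  have hd : DP m w d := runmax_DP hm htot hσ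
  have main : ∀ j, 1 ≤ j → j ≤ m → invs m d j = σ j := by
    intro j
    induction j using Nat.strong_induction_on with
    | _ j IH =>
      intro hj1 hjm
      have hdj : d j = (Finset.Icc 1 j).sup σ := by
        simp only [hddef, runmax, if_pos (show j ∈ Finset.Icc 1 m by
          simp only [Finset.mem_Icc]; omega)]
      have hused : usedSet d (j-1) = (Finset.Icc 1 (j-1)).image σ := by
        rw [usedSet_eq_image hd (j-1) (by omega)]
        apply Finset.image_congr
        intro i hi
        simp only [Finset.coe_Icc, Set.mem_Icc] at hi
        exact IH i (by omega) hi.1 (by omega)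
      have hσjd : σ j ≤ d j := by
        rw [hdj]
        exact Finset.le_sup (by simp only [Finset.mem_Icc]; omega)
      have hσj1 : 1 ≤ σ j := (hσ.2.1 j (by simp only [Finset.mem_Icc]; omega)).1
      have hσjA : σ j ∈ Finset.Icc 1 (d j) \ usedSet d (j-1) := by
        rw [Finset.mem_sdiff, Finset.mem_Icc, hused]
        refine ⟨⟨hσj1, hσjd⟩, ?_⟩
        intro hmem
        obtain ⟨i, hi, hieq⟩ := Finset.mem_image.1 hmem
        simp only [Finset.mem_Icc] at hi
        have hinj := hσ.2.2.1
        have : i = j := hinj (by simp only [Finset.coe_Icc, Set.mem_Icc]; omega)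
          (by simp only [Finset.coe_Icc, Set.mem_Icc]; omega) hieq
        omega
      have hle : σ j ≤ invs m d j := (pick_spec hd hj1 hjm).2.1 _ hσjA
      have hmemA := (pick_spec hd hj1 hjm).1
      rw [Finset.mem_sdiff, Finset.mem_Icc] at hmemA
      rcases Nat.eq_or_lt_of_le hle with heq | hlt
      · omega
      · exfalso
        set x := invs m d j with hx
        obtain ⟨j1, hj1mem, hj1eq⟩ := Finset.exists_mem_eq_sup (Finset.Icc 1 j)
          (Finset.nonempty_Icc.2 hj1) σ
        rw [← hdj] at hj1eq
        simp only [Finset.mem_Icc] at hj1mem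
        rcases Nat.eq_or_lt_of_le hmemA.1.2 with hxd | hxd
        · -- x = d j
          have hj1j : j1 = j := by
            by_contra hne
            apply hmemA.2
            rw [hused]
            apply Finset.mem_image.2
            exact ⟨j1, by simp only [Finset.mem_Icc]; omega, by omega⟩
          rw [hj1j] at hj1eq
          omega
        · -- x < d j
          have hj1j : j1 < j := by
            rcases Nat.eq_or_lt_of_le hj1mem.2 with rfl | h
            · omega
            · exact h
          have hxm : x ∈ Finset.Icc 1 m := by
            simp only [Finset.mem_Icc]
            have hdjm : d j + j ≤ nth w j := (hd.2.2 j (by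
              simp only [Finset.mem_Icc]; omega)).2
            have := nth_ub hm htot hj1 hjm
            omega
          rw [← SP_surj hm htot hσ] at hxm
          obtain ⟨j3, hj3, hj3eq⟩ := Finset.mem_image.1 hxm
          simp only [Finset.mem_Icc] at hj3
          have hj3j : j < j3 := by
            rcases Nat.lt_trichotomy j3 j with h | rfl | h
            · exfalso
              apply hmemA.2
              rw [hused]
              exact Finset.mem_image.2 ⟨j3, by simp only [Finset.mem_Icc]; omega, hj3eq⟩
            · omega
            · exact h
          exact hσ.2.2.2 ⟨j1, j, j3, by simp only [Finset.mem_Icc]; omega,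
            by simp only [Finset.mem_Icc]; omega, hj1j, hj3j, by omega, by omega⟩
  funext j
  by_cases hj : j ∈ Finset.Icc 1 m
  · simp only [Finset.mem_Icc] at hj
    exact main j hj.1 hj.2
  · rw [hσ.1 j hj]
    simp [invs, hj]

lemma cardC (hm : 1 ≤ m) (htot : cntT w (2*m) = m) :
    Nat.card {σ : ℕ → ℕ // SP m w σ} = Nat.card {d : ℕ → ℕ // DP m w d} := by
  apply Nat.card_congr
  refine ⟨fun x => ⟨runmax m x.1, runmax_DP hm htot x.2⟩,
    fun y => ⟨invs m y.1, invs_SP hm htot y.2⟩, ?_, ?_⟩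
  · rintro ⟨σ, hσ⟩
    exact Subtype.ext (invs_runmax hm htot hσ)
  · rintro ⟨d, hd⟩
    exact Subtype.ext (runmax_invs hd)

end Cside

/-! ### The graph side -/

/-- number of `false`s among positions `1..t`. -/
def cntF (w : ℕ → Bool) (t : ℕ) : ℕ := cntT (fun i => !(w i)) t

/-- position of the `i`-th `false` of `w`. -/
noncomputable def nthF (w : ℕ → Bool) (i : ℕ) : ℕ := nth (fun i => !(w i)) i

/-- the partner of a vertex in a matching. -/
noncomputable def ptn (G : SimpleGraph ℕ) (v : ℕ) : ℕ := sInf {u | G.Adj v u}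

/-- the permutation associated with a matching. -/
noncomputable def toσ (m : ℕ) (w : ℕ → Bool) (G : SimpleGraph ℕ) (j : ℕ) : ℕ :=
  if j ∈ Finset.Icc 1 m then cntF w (ptn G (nth w j)) else 0

/-- the matching associated with a permutation. -/
def toG (m : ℕ) (w : ℕ → Bool) (σ : ℕ → ℕ) : SimpleGraph ℕ :=
  SimpleGraph.fromRel fun a b => ∃ j ∈ Finset.Icc 1 m, a = nthF w (σ j) ∧ b = nth w j

lemma ptn_eq {G : SimpleGraph ℕ} {v u : ℕ} (h : ∃! x, G.Adj v x) (hu : G.Adj v u) :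
    ptn G v = u := by
  have hne : {x | G.Adj v x}.Nonempty := ⟨u, hu⟩
  exact h.unique (Nat.sInf_mem hne) hu

lemma cntF_add (w : ℕ → Bool) (t : ℕ) : cntF w t + cntT w t = t := by
  have h := cnt_add w t
  have h2 : ((Finset.Icc 1 t).filter fun i => w i = false).card = cntF w t := by
    unfold cntF cntT
    apply congrArg
    apply Finset.filter_congr
    intro i _
    simp
  omega

section Aside

variable {m : ℕ} {w : ℕ → Bool}

lemma cntF_tot (htot : cntT w (2*m) = m) : cntF w (2*m) = m := by
  have := cntF_add w (2*m); omega

lemma w_nth_spec (htot : cntT w (2*m) = m) {j : ℕ} (hj1 : 1 ≤ j) (hjm : j ≤ m) :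
    1 ≤ nth w j ∧ nth w j ≤ 2*m ∧ w (nth w j) = true ∧ cntT w (nth w j) = j :=
  nth_spec hj1 (show j ≤ cntT w (2*m) by rw [htot]; exact hjm)

lemma w_nthF_spec (htot : cntT w (2*m) = m) {i : ℕ} (hi1 : 1 ≤ i) (him : i ≤ m) :
    1 ≤ nthF w i ∧ nthF w i ≤ 2*m ∧ w (nthF w i) = false ∧ cntF w (nthF w i) = i := by
  have := nth_spec (q := fun i => !(w i)) hi1
    (show i ≤ cntF w (2*m) by rw [cntF_tot htot]; exact him)
  exact ⟨this.1, this.2.1, by simpa [nthF] using this.2.2.1, this.2.2.2⟩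

/-- `j` ≤ `nth w j`. -/
lemma w_nth_ge (htot : cntT w (2*m) = m) {j : ℕ} (hj1 : 1 ≤ j) (hjm : j ≤ m) :
    j ≤ nth w j := by
  have h := w_nth_spec htot hj1 hjm
  have := cntT_le w (nth w j)
  omega

/-- the `i`-th zero is before the `j`-th one whenever `i + j ≤ nth w j`. -/
lemma nthF_lt_nth (htot : cntT w (2*m) = m) {i j : ℕ} (hj1 : 1 ≤ j) (hjm : j ≤ m)
    (hi1 : 1 ≤ i) (hij : i + j ≤ nth w j) : nthF w i < nth w j := by
  obtain ⟨h1, h2, h3, h4⟩ := w_nth_spec htot hj1 hjm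
  have h5 : cntT w (nth w j - 1) = j - 1 := by
    have := cntT_true h1 h3; omega
  have h6 : cntF w (nth w j - 1) = nth w j - j := by
    have := cntF_add w (nth w j - 1); omega
  have h7 : nthF w i ≤ nth w j - 1 := nth_le hi1 (by unfold cntF at h6; omega)
  omega

/-- `nth w` reflects strict order. -/
lemma nth_reflect (htot : cntT w (2*m) = m) {j j' : ℕ} (hj1 : 1 ≤ j) (hjm : j ≤ m)
    (hj'1 : 1 ≤ j') (hj'm : j' ≤ m) (h : nth w j < nth w j') : j < j' := by
  by_contra hc
  have := nth_growth (q := w) hj'1 (show j' ≤ j by omega)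
    (show j ≤ cntT w (2*m) by rw [htot]; exact hjm)
  omega

lemma nthF_reflect (htot : cntT w (2*m) = m) {i i' : ℕ} (hi1 : 1 ≤ i) (him : i ≤ m)
    (hi'1 : 1 ≤ i') (hi'm : i' ≤ m) (h : nthF w i < nthF w i') : i < i' := by
  by_contra hc
  have := nth_growth (q := fun t => !(w t)) hi'1 (show i' ≤ i by omega)
    (show i ≤ cntF w (2*m) by rw [cntF_tot htot]; exact him)
  unfold nthF at h
  omega

/-- basic facts about partners in a matching with base `w`. -/
lemma ptn_fact (htot : cntT w (2*m) = m) {G : SimpleGraph ℕ}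
    (hG : IsMatchingOn (2*m) G) (hB : HasBase (2*m) G w) {b : ℕ} (hb1 : 1 ≤ b)
    (hb2 : b ≤ 2*m) (hb : w b = true) :
    G.Adj b (ptn G b) ∧ ptn G b < b ∧ 1 ≤ ptn G b ∧ w (ptn G b) = false := by
  obtain ⟨u, hu, huq⟩ := (hB b hb1 hb2).1 hb
  have hpe : ptn G b = u := ptn_eq (hG.2 b hb1 hb2) huq
  have hep : 1 ≤ u ∧ u ≤ 2*m := by
    have := hG.1 b u huq
    omega
  refine ⟨hpe ▸ huq, hpe ▸ hu, hpe ▸ hep.1, ?_⟩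
  rw [hpe]
  by_contra hcon
  have hwu : w u = true := by revert hcon; cases w u <;> simp
  obtain ⟨k, hk, hkq⟩ := (hB u hep.1 hep.2).1 hwu
  have hub : G.Adj u b := huq.symm
  have := (hG.2 u hep.1 hep.2).unique hkq hub
  omega

lemma M231_adj_cases {u v : ℕ} (huv : M231.Adj u v) :
    (u = 1 ∧ v = 5) ∨ (u = 2 ∧ v = 6) ∨ (u = 3 ∧ v = 4) ∨
    (v = 1 ∧ u = 5) ∨ (v = 2 ∧ u = 6) ∨ (v = 3 ∧ u = 4) := by
  rw [M231, SimpleGraph.fromRel_adj] at huv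
  rcases huv.2 with h | h <;> simp at h <;> tauto

/-- the permutation of a `M231`-avoiding matching satisfies `SP`. -/
lemma toσ_SP (hm : 1 ≤ m) (htot : cntT w (2*m) = m) {G : SimpleGraph ℕ}
    (hG : IsMatchingOn (2*m) G) (hB : HasBase (2*m) G w)
    (hav : ¬ ContainsPat G M231) : SP m w (toσ m w G) := by
  have key : ∀ j ∈ Finset.Icc 1 m, toσ m w G j = cntF w (ptn G (nth w j)) ∧
      ptn G (nth w j) = nthF w (toσ m w G j) ∧ 1 ≤ toσ m w G j ∧
      toσ m w G j + j ≤ nth w j := by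
    intro j hj
    have hjj : 1 ≤ j ∧ j ≤ m := by simpa only [Finset.mem_Icc] using hj
    obtain ⟨h1, h2, h3, h4⟩ := w_nth_spec htot hjj.1 hjj.2
    obtain ⟨ha, hlt, hp1, hpf⟩ := ptn_fact htot hG hB h1 h2 h3
    have hval : toσ m w G j = cntF w (ptn G (nth w j)) := by
      simp only [toσ, if_pos hj]
    have hcpos : 1 ≤ cntF w (ptn G (nth w j)) :=
      cntT_pos (q := fun t => !(w t)) hp1 (by simp [hpf])
    have hnthF : nthF w (toσ m w G j) = ptn G (nth w j) := by
      rw [hval]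
      exact nth_cnt (q := fun t => !(w t)) hp1 (by simp [hpf])
    have hbd : toσ m w G j + j ≤ nth w j := by
      rw [hval]
      have h5 : cntT w (nth w j - 1) = j - 1 := by
        have := cntT_true h1 h3; omega
      have h6 : cntF w (nth w j - 1) + (j-1) = nth w j - 1 := by
        have := cntF_add w (nth w j - 1); omega
      have h7 : cntF w (ptn G (nth w j)) ≤ cntF w (nth w j - 1) :=
        cntT_mono _ (by omega)
      omega
    exact ⟨hval, hnthF.symm, hval ▸ hcpos, hbd⟩
  refine ⟨fun j hj => by simp only [toσ, if_neg hj], ?_, ?_, ?_⟩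
  · intro j hj
    exact ⟨(key j hj).2.2.1, (key j hj).2.2.2⟩
  · intro j hj j' hj' heq
    simp only [Finset.coe_Icc, Set.mem_Icc] at hj hj'
    have hjm : j ∈ Finset.Icc 1 m := by simp only [Finset.mem_Icc]; omega
    have hj'm : j' ∈ Finset.Icc 1 m := by simp only [Finset.mem_Icc]; omega
    have e1 := (key j hjm).2.1
    have e2 := (key j' hj'm).2.1
    rw [heq] at e1
    have hpeq : ptn G (nth w j) = ptn G (nth w j') := by rw [e1, e2]
    obtain ⟨h1, h2, h3, h4⟩ := w_nth_spec htot hj.1 hj.2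
    obtain ⟨h1', h2', h3', h4'⟩ := w_nth_spec htot hj'.1 hj'.2
    obtain ⟨ha, hlt, hp1, hpf⟩ := ptn_fact htot hG hB h1 h2 h3
    obtain ⟨ha', hlt', hp1', hpf'⟩ := ptn_fact htot hG hB h1' h2' h3'
    rw [hpeq] at ha
    have hup : 1 ≤ ptn G (nth w j') ∧ ptn G (nth w j') ≤ 2*m := by
      have := hG.1 _ _ ha'
      omega
    have := (hG.2 (ptn G (nth w j')) hup.1 hup.2).unique ha.symm ha'.symm
    rw [this] at h4
    omega
  · rintro ⟨j1, j2, j3, hj1, hj3, h12, h23, hlt1, hlt2⟩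
    simp only [Finset.mem_Icc] at hj1 hj3
    have hj2 : 1 ≤ j2 ∧ j2 ≤ m := by omega
    have hj1m : j1 ∈ Finset.Icc 1 m := by simp only [Finset.mem_Icc]; omega
    have hj2m : j2 ∈ Finset.Icc 1 m := by simp only [Finset.mem_Icc]; omega
    have hj3m : j3 ∈ Finset.Icc 1 m := by simp only [Finset.mem_Icc]; omega
    obtain ⟨_, e1, hs1, hb1⟩ := key j1 hj1m
    obtain ⟨_, e2, hs2, hb2⟩ := key j2 hj2m
    obtain ⟨_, e3, hs3, hb3⟩ := key j3 hj3m
    set σ := toσ m w G with hσdef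
    -- positions
    set p1 := nthF w (σ j2) with hp1
    set p2 := nthF w (σ j3) with hp2
    set p3 := nthF w (σ j1) with hp3
    set p4 := nth w j1 with hp4
    set p5 := nth w j2 with hp5
    set p6 := nth w j3 with hp6
    have hσub : σ j1 ≤ m ∧ σ j2 ≤ m ∧ σ j3 ≤ m := by
      have u1 := nth_ub hm htot (show (1:ℕ) ≤ j1 by omega) (by omega)
      have u2 := nth_ub hm htot (show (1:ℕ) ≤ j2 by omega) (by omega)
      have u3 := nth_ub hm htot (show (1:ℕ) ≤ j3 by omega) (by omega)
      omega
    have o1 : p1 < p2 := by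
      rw [hp1, hp2]
      exact nth_lt_nth (q := fun t => !(w t)) hs2 hlt1
        (show σ j3 ≤ cntF w (2*m) by rw [cntF_tot htot]; omega)
    have o2 : p2 < p3 := by
      rw [hp2, hp3]
      exact nth_lt_nth (q := fun t => !(w t)) hs3 hlt2
        (show σ j1 ≤ cntF w (2*m) by rw [cntF_tot htot]; omega)
    have o3 : p3 < p4 := by
      rw [hp3, hp4]
      exact nthF_lt_nth htot (by omega) (by omega) hs1 hb1
    have o4 : p4 < p5 := by
      rw [hp4, hp5]
      exact nth_lt_nth (q := w) (by omega) h12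
        (show j2 ≤ cntT w (2*m) by rw [htot]; omega)
    have o5 : p5 < p6 := by
      rw [hp5, hp6]
      exact nth_lt_nth (q := w) (by omega) h23
        (show j3 ≤ cntT w (2*m) by rw [htot]; omega)
    have hp1pos : 1 ≤ p1 := (w_nthF_spec htot hs2 (by omega)).1
    -- adjacencies
    have adj1 : G.Adj p1 p5 := by
      rw [← e2]
      obtain ⟨H1, H2, H3, _⟩ := w_nth_spec htot hj2.1 hj2.2
      exact ((ptn_fact htot hG hB H1 H2 H3).1).symm
    have adj2 : G.Adj p2 p6 := by
      rw [← e3]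
      obtain ⟨H1, H2, H3, _⟩ := w_nth_spec htot (show (1:ℕ) ≤ j3 by omega) hj3.2
      exact ((ptn_fact htot hG hB H1 H2 H3).1).symm
    have adj3 : G.Adj p3 p4 := by
      rw [← e1]
      obtain ⟨H1, H2, H3, _⟩ := w_nth_spec htot hj1.1 (by omega)
      exact ((ptn_fact htot hG hB H1 H2 H3).1).symm
    -- build the embedding
    apply hav
    refine ⟨fun t => match t with
      | 0 => 0 | 1 => p1 | 2 => p2 | 3 => p3 | 4 => p4 | 5 => p5 | 6 => p6
      | (t+7) => p6 + t + 7, ?_, ?_⟩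
    · apply strictMono_nat_of_lt_succ
      intro t
      rcases t with _|_|_|_|_|_|_|t
      · show 0 < p1; omega
      · show p1 < p2; omega
      · show p2 < p3; omega
      · show p3 < p4; omega
      · show p4 < p5; omega
      · show p5 < p6; omega
      · show p6 < p6 + 0 + 7; omega
      · show p6 + t + 7 < p6 + (t+1) + 7; omega
    · intro u v huv
      have h := M231_adj_cases huv
      rcases h with ⟨rfl, rfl⟩ | ⟨rfl, rfl⟩ | ⟨rfl, rfl⟩ | ⟨rfl, rfl⟩ | ⟨rfl, rfl⟩ | ⟨rfl, rfl⟩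
      · exact adj1
      · exact adj2
      · exact adj3
      · exact adj1.symm
      · exact adj2.symm
      · exact adj3.symm

lemma toG_adj {σ : ℕ → ℕ} (a b : ℕ) : (toG m w σ).Adj a b ↔ a ≠ b ∧
    ((∃ j ∈ Finset.Icc 1 m, a = nthF w (σ j) ∧ b = nth w j) ∨
     (∃ j ∈ Finset.Icc 1 m, b = nthF w (σ j) ∧ a = nth w j)) := by
  rw [toG, SimpleGraph.fromRel_adj]

lemma SP_lt (htot : cntT w (2*m) = m) {σ : ℕ → ℕ} (hσ : SP m w σ) {j : ℕ}
    (hj : j ∈ Finset.Icc 1 m) : nthF w (σ j) < nth w j := by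
  have hjj : 1 ≤ j ∧ j ≤ m := by simpa only [Finset.mem_Icc] using hj
  exact nthF_lt_nth htot hjj.1 hjj.2 (hσ.2.1 j hj).1 (hσ.2.1 j hj).2

lemma SP_ub (hm : 1 ≤ m) (htot : cntT w (2*m) = m) {σ : ℕ → ℕ} (hσ : SP m w σ) {j : ℕ}
    (hj : j ∈ Finset.Icc 1 m) : σ j ≤ m := by
  have hjj : 1 ≤ j ∧ j ≤ m := by simpa only [Finset.mem_Icc] using hj
  have := (hσ.2.1 j hj).2
  have := nth_ub hm htot hjj.1 hjj.2
  omega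

lemma toG_matching (hm : 1 ≤ m) (htot : cntT w (2*m) = m) {σ : ℕ → ℕ} (hσ : SP m w σ) :
    IsMatchingOn (2*m) (toG m w σ) := by
  constructor
  · intro a b hab
    rw [toG_adj] at hab
    have work : ∀ x y : ℕ, (∃ j ∈ Finset.Icc 1 m, x = nthF w (σ j) ∧ y = nth w j) →
        1 ≤ x ∧ x ≤ 2*m ∧ 1 ≤ y ∧ y ≤ 2*m := by
      rintro x y ⟨j, hj, rfl, rfl⟩
      have hjj : 1 ≤ j ∧ j ≤ m := by simpa only [Finset.mem_Icc] using hj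
      obtain ⟨a1, a2, _, _⟩ := w_nthF_spec htot (hσ.2.1 j hj).1 (SP_ub hm htot hσ hj)
      obtain ⟨b1, b2, _, _⟩ := w_nth_spec htot hjj.1 hjj.2
      exact ⟨a1, a2, b1, b2⟩
    rcases hab.2 with h | h
    · have := work a b h; omega
    · have := work b a h; omega
  · intro v hv1 hv2
    by_cases hv : w v = true
    · set j := cntT w v with hjdef
      have hj1 : 1 ≤ j := cntT_pos hv1 hv
      have hjm : j ≤ m := by rw [hjdef, ← htot]; exact cntT_mono w hv2
      have hjmem : j ∈ Finset.Icc 1 m := by simp only [Finset.mem_Icc]; omega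
      have hveq : nth w j = v := nth_cnt hv1 hv
      refine ⟨nthF w (σ j), ?_, ?_⟩
      · show (toG m w σ).Adj v (nthF w (σ j))
        rw [toG_adj]
        have := SP_lt htot hσ hjmem
        exact ⟨by omega, Or.inr ⟨j, hjmem, rfl, hveq.symm⟩⟩
      · intro u' hu'
        rw [toG_adj] at hu'
        rcases hu'.2 with ⟨j', hj', hveq', _⟩ | ⟨j', hj', hueq', hveq'⟩
        · exfalso
          have hjj' : 1 ≤ j' ∧ j' ≤ m := by simpa only [Finset.mem_Icc] using hj'
          have := (w_nthF_spec htot (hσ.2.1 j' hj').1 (SP_ub hm htot hσ hj')).2.2.1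
          rw [← hveq'] at this
          rw [this] at hv
          simp at hv
        · have hjj' : 1 ≤ j' ∧ j' ≤ m := by simpa only [Finset.mem_Icc] using hj'
          have : j' = j := by
            have h4 := (w_nth_spec htot hjj'.1 hjj'.2).2.2.2
            rw [← hveq'] at h4
            omega
          rw [hueq', this]
    · have hvf : w v = false := by revert hv; cases w v <;> simp
      set i := cntF w v with hidef
      have hi1 : 1 ≤ i := cntT_pos (q := fun t => !(w t)) hv1 (by simp [hvf])
      have him : i ≤ m := by
        rw [hidef, ← cntF_tot htot]
        exact cntT_mono _ hv2
      have hveq : nthF w i = v := nth_cnt (q := fun t => !(w t)) hv1 (by simp [hvf])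
      have himem : i ∈ Finset.Icc 1 m := by simp only [Finset.mem_Icc]; omega
      rw [← SP_surj hm htot hσ] at himem
      obtain ⟨j, hj, hji⟩ := Finset.mem_image.1 himem
      refine ⟨nth w j, ?_, ?_⟩
      · show (toG m w σ).Adj v (nth w j)
        rw [toG_adj]
        have hlt := SP_lt htot hσ hj
        rw [hji, hveq] at hlt
        exact ⟨by omega, Or.inl ⟨j, hj, by rw [hji, hveq], rfl⟩⟩
      · intro u' hu'
        rw [toG_adj] at hu'
        rcases hu'.2 with ⟨j', hj', hveq', hueq'⟩ | ⟨j', hj', hueq', hveq'⟩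
        · have hjj' : 1 ≤ j' ∧ j' ≤ m := by simpa only [Finset.mem_Icc] using hj'
          have hcv : cntF w v = σ j' := by
            rw [hveq']
            exact (w_nthF_spec htot (hσ.2.1 j' hj').1 (SP_ub hm htot hσ hj')).2.2.2
          have : j' = j := hσ.2.2.1 (by simpa only [Finset.coe_Icc, Set.mem_Icc]
              using (by simpa only [Finset.mem_Icc] using hj' : 1 ≤ j' ∧ j' ≤ m))
            (by simpa only [Finset.coe_Icc, Set.mem_Icc]
              using (by simpa only [Finset.mem_Icc] using hj : 1 ≤ j ∧ j ≤ m))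
            (by omega)
          rw [hueq', this]
        · exfalso
          have hjj' : 1 ≤ j' ∧ j' ≤ m := by simpa only [Finset.mem_Icc] using hj'
          have := (w_nth_spec htot hjj'.1 hjj'.2).2.2.1
          rw [← hveq'] at this
          exact hv this

lemma toG_base (hm : 1 ≤ m) (htot : cntT w (2*m) = m) {σ : ℕ → ℕ} (hσ : SP m w σ) :
    HasBase (2*m) (toG m w σ) w := by
  intro i hi1 hi2
  constructor
  · intro hw
    set j := cntT w i with hjdef
    have hj1 : 1 ≤ j := cntT_pos hi1 hw
    have hjm : j ≤ m := by rw [hjdef, ← htot]; exact cntT_mono w hi2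
    have hjmem : j ∈ Finset.Icc 1 m := by simp only [Finset.mem_Icc]; omega
    have hveq : nth w j = i := nth_cnt hi1 hw
    refine ⟨nthF w (σ j), ?_, ?_⟩
    · have := SP_lt htot hσ hjmem
      omega
    · rw [toG_adj]
      have := SP_lt htot hσ hjmem
      exact ⟨by omega, Or.inr ⟨j, hjmem, rfl, hveq.symm⟩⟩
  · rintro ⟨k, hk, hadj⟩
    rw [toG_adj] at hadj
    rcases hadj.2 with ⟨j, hj, hieq, hkeq⟩ | ⟨j, hj, hkeq, hieq⟩
    · exfalso
      have := SP_lt htot hσ hj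
      omega
    · rw [hieq]
      have hjj : 1 ≤ j ∧ j ≤ m := by simpa only [Finset.mem_Icc] using hj
      exact (w_nth_spec htot hjj.1 hjj.2).2.2.1

lemma M231_adj15 : M231.Adj 1 5 := by
  rw [M231, SimpleGraph.fromRel_adj]
  simp

lemma M231_adj26 : M231.Adj 2 6 := by
  rw [M231, SimpleGraph.fromRel_adj]
  simp

lemma M231_adj34 : M231.Adj 3 4 := by
  rw [M231, SimpleGraph.fromRel_adj]
  simp

lemma toG_avoid (hm : 1 ≤ m) (htot : cntT w (2*m) = m) {σ : ℕ → ℕ} (hσ : SP m w σ) :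
    ¬ ContainsPat (toG m w σ) M231 := by
  rintro ⟨f, hf, hedge⟩
  have extract : ∀ x y : ℕ, x < y → (toG m w σ).Adj x y →
      ∃ j ∈ Finset.Icc 1 m, x = nthF w (σ j) ∧ y = nth w j := by
    intro x y hxy hadj
    rw [toG_adj] at hadj
    rcases hadj.2 with h | ⟨j, hj, hyeq, hxeq⟩
    · exact h
    · exfalso
      have := SP_lt htot hσ hj
      omega
  obtain ⟨ja, hja, ha1, ha2⟩ := extract (f 3) (f 4) (hf (by omega)) (hedge 3 4 M231_adj34)
  obtain ⟨jb, hjb, hb1, hb2⟩ := extract (f 1) (f 5) (hf (by omega)) (hedge 1 5 M231_adj15)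
  obtain ⟨jc, hjc, hc1, hc2⟩ := extract (f 2) (f 6) (hf (by omega)) (hedge 2 6 M231_adj26)
  have hjja : 1 ≤ ja ∧ ja ≤ m := by simpa only [Finset.mem_Icc] using hja
  have hjjb : 1 ≤ jb ∧ jb ≤ m := by simpa only [Finset.mem_Icc] using hjb
  have hjjc : 1 ≤ jc ∧ jc ≤ m := by simpa only [Finset.mem_Icc] using hjc
  have hab : ja < jb := nth_reflect htot hjja.1 hjja.2 hjjb.1 hjjb.2
    (by rw [← ha2, ← hb2]; exact hf (by omega))
  have hbc : jb < jc := nth_reflect htot hjjb.1 hjjb.2 hjjc.1 hjjc.2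
    (by rw [← hb2, ← hc2]; exact hf (by omega))
  have hσbc : σ jb < σ jc := nthF_reflect htot (hσ.2.1 jb hjb).1 (SP_ub hm htot hσ hjb)
    (hσ.2.1 jc hjc).1 (SP_ub hm htot hσ hjc) (by rw [← hb1, ← hc1]; exact hf (by omega))
  have hσca : σ jc < σ ja := nthF_reflect htot (hσ.2.1 jc hjc).1 (SP_ub hm htot hσ hjc)
    (hσ.2.1 ja hja).1 (SP_ub hm htot hσ hja) (by rw [← hc1, ← ha1]; exact hf (by omega))
  exact hσ.2.2.2 ⟨ja, jb, jc, hja, hjc, hab, hbc, hσbc, hσca⟩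

lemma toσ_toG (hm : 1 ≤ m) (htot : cntT w (2*m) = m) {σ : ℕ → ℕ} (hσ : SP m w σ) :
    toσ m w (toG m w σ) = σ := by
  funext j
  by_cases hj : j ∈ Finset.Icc 1 m
  · have hjj : 1 ≤ j ∧ j ≤ m := by simpa only [Finset.mem_Icc] using hj
    obtain ⟨h1, h2, h3, h4⟩ := w_nth_spec htot hjj.1 hjj.2
    have hadj : (toG m w σ).Adj (nth w j) (nthF w (σ j)) := by
      rw [toG_adj]
      have := SP_lt htot hσ hj
      exact ⟨by omega, Or.inr ⟨j, hj, rfl, rfl⟩⟩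
    have hptn : ptn (toG m w σ) (nth w j) = nthF w (σ j) :=
      ptn_eq ((toG_matching hm htot hσ).2 (nth w j) h1 h2) hadj
    simp only [toσ, if_pos hj, hptn]
    exact (w_nthF_spec htot (hσ.2.1 j hj).1 (SP_ub hm htot hσ hj)).2.2.2
  · simp only [toσ, if_neg hj]
    exact (hσ.1 j hj).symm

lemma toG_toσ (hm : 1 ≤ m) (htot : cntT w (2*m) = m) {G : SimpleGraph ℕ}
    (hG : IsMatchingOn (2*m) G) (hB : HasBase (2*m) G w) :
    toG m w (toσ m w G) = G := by
  have dir : ∀ a b : ℕ, a < b → G.Adj a b →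
      ∃ j ∈ Finset.Icc 1 m, a = nthF w (toσ m w G j) ∧ b = nth w j := by
    intro a b hab hadj
    have hbr : 1 ≤ b ∧ b ≤ 2*m ∧ 1 ≤ a := by
      have := hG.1 a b hadj
      omega
    have hwb : w b = true := by
      apply (hB b hbr.1 hbr.2.1).2
      exact ⟨a, hab, hadj.symm⟩
    set j := cntT w b with hjdef
    have hj1 : 1 ≤ j := cntT_pos hbr.1 hwb
    have hjm : j ≤ m := by rw [hjdef, ← htot]; exact cntT_mono w hbr.2.1
    have hjmem : j ∈ Finset.Icc 1 m := by simp only [Finset.mem_Icc]; omega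
    have hbeq : nth w j = b := nth_cnt hbr.1 hwb
    have hptn : ptn G b = a := ptn_eq (hG.2 b hbr.1 hbr.2.1) hadj.symm
    obtain ⟨_, _, hpp1, hppf⟩ := ptn_fact htot hG hB hbr.1 hbr.2.1 hwb
    refine ⟨j, hjmem, ?_, hbeq.symm⟩
    simp only [toσ, if_pos hjmem, hbeq, hptn]
    rw [hptn] at hpp1 hppf
    exact (nth_cnt (q := fun t => !(w t)) hpp1 (by simp [hppf])).symm
  ext a b
  rw [toG_adj]
  constructor
  · rintro ⟨hne, ⟨j, hj, haeq, hbeq⟩ | ⟨j, hj, hbeq, haeq⟩⟩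
    · have hjj : 1 ≤ j ∧ j ≤ m := by simpa only [Finset.mem_Icc] using hj
      obtain ⟨h1, h2, h3, _⟩ := w_nth_spec htot hjj.1 hjj.2
      obtain ⟨hpa, hplt, hpp1, hppf⟩ := ptn_fact htot hG hB h1 h2 h3
      have : a = ptn G (nth w j) := by
        rw [haeq]
        simp only [toσ, if_pos hj]
        exact (nth_cnt (q := fun t => !(w t)) hpp1 (by simp [hppf]))
      rw [this, hbeq]
      exact hpa.symm
    · have hjj : 1 ≤ j ∧ j ≤ m := by simpa only [Finset.mem_Icc] using hj
      obtain ⟨h1, h2, h3, _⟩ := w_nth_spec htot hjj.1 hjj.2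
      obtain ⟨hpa, hplt, hpp1, hppf⟩ := ptn_fact htot hG hB h1 h2 h3
      have : b = ptn G (nth w j) := by
        rw [hbeq]
        simp only [toσ, if_pos hj]
        exact (nth_cnt (q := fun t => !(w t)) hpp1 (by simp [hppf]))
      rw [this, haeq]
      exact hpa
  · intro hadj
    have hne : a ≠ b := hadj.ne
    rcases Nat.lt_or_ge a b with hab | hab
    · exact ⟨hne, Or.inl (dir a b hab hadj)⟩
    · exact ⟨hne, Or.inr (dir b a (by omega) hadj.symm)⟩

lemma cardA (hm : 1 ≤ m) (htot : cntT w (2*m) = m) :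
    Nat.card {G : SimpleGraph ℕ // IsMatchingOn (2*m) G ∧ HasBase (2*m) G w ∧
      ¬ ContainsPat G M231} = Nat.card {σ : ℕ → ℕ // SP m w σ} := by
  apply Nat.card_congr
  refine ⟨fun x => ⟨toσ m w x.1, toσ_SP hm htot x.2.1 x.2.2.1 x.2.2.2⟩,
    fun y => ⟨toG m w y.1, toG_matching hm htot y.2, toG_base hm htot y.2,
      toG_avoid hm htot y.2⟩, ?_, ?_⟩
  · rintro ⟨G, hG⟩
    exact Subtype.ext (toG_toσ hm htot hG.1 hG.2.1)
  · rintro ⟨σ, hσ⟩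
    exact Subtype.ext (toσ_toG hm htot hσ)

end Aside

end Stmt18aux

/-- `g(m,w,M_231)` equals the number of Dyck words `p` of length `2m`
that do not exceed `w` (Dyck words are counted in normalized form: `p i = false`
outside the positions `1,…,2m`). -/
theorem stmt18 (m : ℕ) (hm : 0 < m) (w : ℕ → Bool) (hw : IsDyckWord (2*m) w) :
    Nat.card {G : SimpleGraph ℕ // IsMatchingOn (2*m) G ∧ HasBase (2*m) G w ∧
      ¬ ContainsPat G M231} =
    Nat.card {p : ℕ → Bool // IsDyckWord (2*m) p ∧ DoesNotExceed (2*m) p w ∧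
      ∀ i : ℕ, (i = 0 ∨ 2*m < i) → p i = false} := by
  have htot : Stmt18aux.cntT w (2*m) = m := by
    have := hw.1
    unfold Stmt18aux.cntT
    omega
  rw [Stmt18aux.cardA hm htot, Stmt18aux.cardC hm htot, Stmt18aux.cardB hm hw]
end

section
/- For every positive integer m and every Dyck word w of length 2m, g(m,w,M_231) = g(m,w,M_321); i.e., the number of matchings on [2m] with base w avoiding M_231 equals the number of matchings on [2m] with base w avoiding M_321 (three pairwise nested edges). -/
namespace S19

/-- Partial matching on `[n]` compatible with word `w`. -/
def PM (n : ℕ) (w : ℕ → Bool) (M : Set (ℕ × ℕ)) : Prop :=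
  (∀ e ∈ M, 1 ≤ e.1 ∧ e.1 < e.2 ∧ e.2 ≤ n) ∧
  (∀ e ∈ M, ∀ e' ∈ M, e ≠ e' → e.1 ≠ e'.1 ∧ e.1 ≠ e'.2 ∧ e.2 ≠ e'.1 ∧ e.2 ≠ e'.2) ∧
  (∀ i : ℕ, 1 ≤ i → i ≤ n → ((w i = true) ↔ ∃ e ∈ M, e.2 = i)) ∧
  (∀ e ∈ M, w e.1 = false)

def stubs (n : ℕ) (w : ℕ → Bool) (M : Set (ℕ × ℕ)) : Set ℕ :=
  {i | 1 ≤ i ∧ i ≤ n ∧ w i = false ∧ ∀ e ∈ M, e.1 ≠ i}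

def flag (M : Set (ℕ × ℕ)) (o : ℕ) : Prop := ∃ e ∈ M, o < e.1

noncomputable def sA (n : ℕ) (w : ℕ → Bool) (M : Set (ℕ × ℕ)) : ℕ :=
  (stubs n w M ∩ {o | flag M o}).ncard

noncomputable def sB (n : ℕ) (w : ℕ → Bool) (M : Set (ℕ × ℕ)) : ℕ :=
  (stubs n w M ∩ {o | ¬ flag M o}).ncard

def Av321 (M : Set (ℕ × ℕ)) : Prop :=
  ∀ e1 ∈ M, ∀ e2 ∈ M, ∀ e3 ∈ M,
    ¬ (e1.1 < e2.1 ∧ e2.1 < e3.1 ∧ e3.2 < e2.2 ∧ e2.2 < e1.2)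

def Av231 (M : Set (ℕ × ℕ)) : Prop :=
  ∀ e1 ∈ M, ∀ e2 ∈ M, ∀ e3 ∈ M,
    ¬ (e1.1 < e2.1 ∧ e2.1 < e3.1 ∧ e3.2 < e1.2 ∧ e1.2 < e2.2)

def Vi321 (n : ℕ) (w : ℕ → Bool) (M : Set (ℕ × ℕ)) : Prop :=
  ∀ s ∈ stubs n w M, ∀ e ∈ M, ∀ e' ∈ M, ¬ (s < e.1 ∧ e.1 < e'.1 ∧ e'.2 < e.2)

def Vi231 (n : ℕ) (w : ℕ → Bool) (M : Set (ℕ × ℕ)) : Prop :=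
  ∀ s ∈ stubs n w M, ∀ e ∈ M, ∀ e' ∈ M, ¬ (e.1 < s ∧ s < e'.1 ∧ e'.2 < e.2)

def A321 (n : ℕ) (w : ℕ → Bool) (a b : ℕ) : Set (Set (ℕ × ℕ)) :=
  {M | PM n w M ∧ Av321 M ∧ Vi321 n w M ∧ sA n w M = a ∧ sB n w M = b}

def A231 (n : ℕ) (w : ℕ → Bool) (a b : ℕ) : Set (Set (ℕ × ℕ)) :=
  {M | PM n w M ∧ Av231 M ∧ Vi231 n w M ∧ sA n w M = a ∧ sB n w M = b}

/- basic lemmas -/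

lemma PM.mfin {n w M} (h : PM n w M) : M.Finite := by
  have : M ⊆ (Set.Icc 1 n) ×ˢ (Set.Icc 1 n) := by
    intro e he
    obtain ⟨h1, h2, h3⟩ := h.1 e he
    exact ⟨⟨h1, le_of_lt (lt_of_lt_of_le h2 h3)⟩, ⟨le_trans h1 (le_of_lt h2), h3⟩⟩
  exact Set.Finite.subset ((Set.finite_Icc 1 n).prod (Set.finite_Icc 1 n)) this

lemma stubs_finite (n w M) : (stubs n w M).Finite :=
  Set.Finite.subset (Set.finite_Icc 1 n) (fun i hi => ⟨hi.1, hi.2.1⟩)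

lemma flag_antitone {M : Set (ℕ × ℕ)} {s o : ℕ} (hso : s ≤ o) (h : flag M o) : flag M s := by
  obtain ⟨e, he, hlt⟩ := h; exact ⟨e, he, lt_of_le_of_lt hso hlt⟩

lemma A321_finite (n w a b) : (A321 n w a b).Finite := by
  apply Set.Finite.subset (Set.Finite.finite_subsets
    (((Set.finite_Icc 1 n).prod (Set.finite_Icc 1 n))))
  intro M hM
  intro e he
  obtain ⟨h1, h2, h3⟩ := hM.1.1 e he
  exact ⟨⟨h1, le_of_lt (lt_of_lt_of_le h2 h3)⟩, ⟨le_trans h1 (le_of_lt h2), h3⟩⟩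

lemma A231_finite (n w a b) : (A231 n w a b).Finite := by
  apply Set.Finite.subset (Set.Finite.finite_subsets
    (((Set.finite_Icc 1 n).prod (Set.finite_Icc 1 n))))
  intro M hM
  intro e he
  obtain ⟨h1, h2, h3⟩ := hM.1.1 e he
  exact ⟨⟨h1, le_of_lt (lt_of_lt_of_le h2 h3)⟩, ⟨le_trans h1 (le_of_lt h2), h3⟩⟩

/-- base case: at n = 0 the two sets coincide. -/
lemma base_eq (w a b) : A321 0 w a b = A231 0 w a b := by
  have hempty : ∀ M : Set (ℕ × ℕ), PM 0 w M → M = ∅ := by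
    intro M h
    ext e
    simp only [Set.mem_empty_iff_false, iff_false]
    intro he
    obtain ⟨h1, h2, h3⟩ := h.1 e he
    omega
  ext M
  constructor
  · rintro ⟨h1, _, _, h4, h5⟩
    refine ⟨h1, ?_, ?_, h4, h5⟩
    · intro e1 he1; rw [hempty M h1] at he1; exact absurd he1 (Set.notMem_empty _)
    · intro s hs e he; rw [hempty M h1] at he; exact absurd he (Set.notMem_empty _)
  · rintro ⟨h1, _, _, h4, h5⟩
    refine ⟨h1, ?_, ?_, h4, h5⟩
    · intro e1 he1; rw [hempty M h1] at he1; exact absurd he1 (Set.notMem_empty _)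
    · intro s hs e he; rw [hempty M h1] at he; exact absurd he (Set.notMem_empty _)

section step0
variable {n : ℕ} {w : ℕ → Bool} {M : Set (ℕ × ℕ)} (hw : w (n+1) = false)

lemma pm_down (hw : w (n+1) = false) (h : PM (n+1) w M) : PM n w M := by
  obtain ⟨h1, h2, h3, h4⟩ := h
  have hb : ∀ e ∈ M, 1 ≤ e.1 ∧ e.1 < e.2 ∧ e.2 ≤ n := by
    intro e he
    obtain ⟨a1, a2, a3⟩ := h1 e he
    rcases Nat.lt_or_ge e.2 (n+1) with h | h
    · exact ⟨a1, a2, by omega⟩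
    · exfalso
      have : e.2 = n + 1 := by omega
      have := (h3 (n+1) (by omega) (le_refl _)).2 ⟨e, he, this⟩
      rw [hw] at this; exact Bool.false_ne_true this
  refine ⟨hb, h2, ?_, h4⟩
  intro i hi1 hi2
  exact h3 i hi1 (by omega)

lemma pm_up (hw : w (n+1) = false) (h : PM n w M) : PM (n+1) w M := by
  obtain ⟨h1, h2, h3, h4⟩ := h
  refine ⟨fun e he => by obtain ⟨a1,a2,a3⟩ := h1 e he; exact ⟨a1,a2, by omega⟩, h2, ?_, h4⟩
  intro i hi1 hi2
  rcases Nat.lt_or_ge i (n+1) with h | h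
  · exact h3 i hi1 (by omega)
  · have hi : i = n + 1 := by omega
    subst hi
    rw [hw]
    simp only [Bool.false_eq_true, false_iff]
    rintro ⟨e, he, he2⟩
    have := (h1 e he).2.2
    omega

lemma stubs_up (hw : w (n+1) = false) (h : PM n w M) :
    stubs (n+1) w M = insert (n+1) (stubs n w M) := by
  ext i
  simp only [stubs, Set.mem_setOf_eq, Set.mem_insert_iff]
  constructor
  · rintro ⟨a1, a2, a3, a4⟩
    rcases Nat.lt_or_ge i (n+1) with hh | hh
    · exact Or.inr ⟨a1, by omega, a3, a4⟩
    · exact Or.inl (by omega)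
  · rintro (rfl | ⟨a1, a2, a3, a4⟩)
    · refine ⟨by omega, le_refl _, hw, ?_⟩
      intro e he
      have := (h.1 e he).2
      omega
    · exact ⟨a1, by omega, a3, a4⟩

lemma not_flag_top (h : PM n w M) : ¬ flag M (n+1) := by
  rintro ⟨e, he, hlt⟩
  have := (h.1 e he).2
  omega

lemma sA_up (hw : w (n+1) = false) (h : PM n w M) : sA (n+1) w M = sA n w M := by
  unfold sA
  rw [stubs_up hw h]
  congr 1
  ext i
  simp only [Set.mem_inter_iff, Set.mem_insert_iff, Set.mem_setOf_eq]
  constructor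
  · rintro ⟨rfl | hi, hf⟩
    · exact absurd hf (not_flag_top h)
    · exact ⟨hi, hf⟩
  · rintro ⟨hi, hf⟩; exact ⟨Or.inr hi, hf⟩

lemma sB_up (hw : w (n+1) = false) (h : PM n w M) : sB (n+1) w M = sB n w M + 1 := by
  unfold sB
  rw [stubs_up hw h]
  have : insert (n+1) (stubs n w M) ∩ {o | ¬ flag M o}
      = insert (n+1) (stubs n w M ∩ {o | ¬ flag M o}) := by
    ext i
    simp only [Set.mem_inter_iff, Set.mem_insert_iff, Set.mem_setOf_eq]
    constructor
    · rintro ⟨rfl | hi, hf⟩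
      · exact Or.inl rfl
      · exact Or.inr ⟨hi, hf⟩
    · rintro (rfl | ⟨hi, hf⟩)
      · exact ⟨Or.inl rfl, not_flag_top h⟩
      · exact ⟨Or.inr hi, hf⟩
  rw [this]
  apply Set.ncard_insert_of_notMem
  · rintro ⟨hi, -⟩
    exact absurd hi.2.1 (by omega)
  · exact Set.Finite.subset (stubs_finite n w M) (Set.inter_subset_left)

end step0


section step0eq
variable {n : ℕ} {w : ℕ → Bool} {a b : ℕ}

lemma step0_321 (hw : w (n+1) = false) : A321 (n+1) w a (b+1) = A321 n w a b := by
  ext M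
  constructor
  · rintro ⟨h1, h2, h3, h4, h5⟩
    have h1' := pm_down hw h1
    refine ⟨h1', h2, ?_, by rw [← sA_up hw h1']; exact h4, by have := sB_up hw h1'; omega⟩
    intro s hs e he e' he'
    exact h3 s (by rw [stubs_up hw h1']; exact Set.mem_insert_of_mem _ hs) e he e' he'
  · rintro ⟨h1, h2, h3, h4, h5⟩
    refine ⟨pm_up hw h1, h2, ?_, by rw [sA_up hw h1]; exact h4, by rw [sB_up hw h1]; omega⟩
    intro s hs e he e' he'
    rw [stubs_up hw h1] at hs
    rcases hs with rfl | hs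
    · rintro ⟨c1, c2, c3⟩
      have := (h1.1 e he).2
      omega
    · exact h3 s hs e he e' he'

lemma step0_231 (hw : w (n+1) = false) : A231 (n+1) w a (b+1) = A231 n w a b := by
  ext M
  constructor
  · rintro ⟨h1, h2, h3, h4, h5⟩
    have h1' := pm_down hw h1
    refine ⟨h1', h2, ?_, by rw [← sA_up hw h1']; exact h4, by have := sB_up hw h1'; omega⟩
    intro s hs e he e' he'
    exact h3 s (by rw [stubs_up hw h1']; exact Set.mem_insert_of_mem _ hs) e he e' he'
  · rintro ⟨h1, h2, h3, h4, h5⟩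
    refine ⟨pm_up hw h1, h2, ?_, by rw [sA_up hw h1]; exact h4, by rw [sB_up hw h1]; omega⟩
    intro s hs e he e' he'
    rw [stubs_up hw h1] at hs
    rcases hs with rfl | hs
    · rintro ⟨c1, c2, c3⟩
      have := (h1.1 e' he').2
      omega
    · exact h3 s hs e he e' he'

lemma step0_zero_321 (hw : w (n+1) = false) : A321 (n+1) w a 0 = ∅ := by
  ext M
  simp only [Set.mem_empty_iff_false, iff_false]
  rintro ⟨h1, h2, h3, h4, h5⟩
  have := sB_up hw (pm_down hw h1)
  omega

lemma step0_zero_231 (hw : w (n+1) = false) : A231 (n+1) w a 0 = ∅ := by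
  ext M
  simp only [Set.mem_empty_iff_false, iff_false]
  rintro ⟨h1, h2, h3, h4, h5⟩
  have := sB_up hw (pm_down hw h1)
  omega

end step0eq

lemma nth_unique {S : Set ℕ} (hS : S.Finite) {o o' : ℕ} (ho : o ∈ S) (ho' : o' ∈ S)
    (h : (S ∩ Set.Iio o).ncard = (S ∩ Set.Iio o').ncard) : o = o' := by
  by_contra hne
  wlog hlt : o < o' generalizing o o'
  · exact this ho' ho h.symm (Ne.symm hne) (by omega)
  have hsub : insert o (S ∩ Set.Iio o) ⊆ S ∩ Set.Iio o' := by
    rintro s (rfl | hs)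
    · exact ⟨ho, hlt⟩
    · exact ⟨hs.1, lt_trans hs.2 hlt⟩
  have h1 : (insert o (S ∩ Set.Iio o)).ncard = (S ∩ Set.Iio o).ncard + 1 :=
    Set.ncard_insert_of_notMem (by simp) (hS.subset Set.inter_subset_left)
  have h2 : (insert o (S ∩ Set.Iio o)).ncard ≤ (S ∩ Set.Iio o').ncard :=
    Set.ncard_le_ncard hsub (hS.subset Set.inter_subset_left)
  omega

lemma nth_exists {S : Set ℕ} (hS : S.Finite) {k : ℕ} (hk : k < S.ncard) :
    ∃ o ∈ S, (S ∩ Set.Iio o).ncard = k := by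
  induction k with
  | zero =>
    have hne : S.Nonempty := by
      rcases S.eq_empty_or_nonempty with rfl | h
      · simp [Set.ncard_empty] at hk
      · exact h
    refine ⟨sInf S, Nat.sInf_mem hne, ?_⟩
    have : S ∩ Set.Iio (sInf S) = ∅ := by
      ext s
      simp only [Set.mem_inter_iff, Set.mem_Iio, Set.mem_empty_iff_false, iff_false, not_and]
      intro hs
      exact not_lt.mpr (Nat.sInf_le hs)
    rw [this, Set.ncard_empty]
  | succ k ih =>
    obtain ⟨o, ho, hcount⟩ := ih (by omega)
    set S' := S ∩ {s | o < s} with hS'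
    have hS'fin : S'.Finite := hS.subset Set.inter_subset_left
    have hsplit : S = (S ∩ Set.Iio o) ∪ ({o} ∪ S') := by
      ext s
      simp only [Set.mem_union, Set.mem_inter_iff, Set.mem_Iio, Set.mem_singleton_iff, hS',
        Set.mem_setOf_eq]
      constructor
      · intro hs
        rcases lt_trichotomy s o with h | h | h
        · exact Or.inl ⟨hs, h⟩
        · exact Or.inr (Or.inl h)
        · exact Or.inr (Or.inr ⟨hs, h⟩)
      · rintro (⟨hs, _⟩ | rfl | ⟨hs, _⟩) <;> first | exact hs | exact ho
    have hd1 : Disjoint (S ∩ Set.Iio o) ({o} ∪ S') := by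
      rw [Set.disjoint_left]
      rintro s ⟨_, hs⟩ hmem
      rw [Set.mem_Iio] at hs
      rcases hmem with h | ⟨_, hs'⟩
      · rw [Set.mem_singleton_iff] at h; omega
      · simp only [Set.mem_setOf_eq] at hs'; omega
    have hd2 : Disjoint ({o} : Set ℕ) S' := by
      rw [Set.disjoint_left]
      rintro s rfl ⟨_, hs'⟩
      simp only [Set.mem_setOf_eq] at hs'
      omega
    have hcard : S.ncard = k + 1 + S'.ncard := by
      rw [hsplit, Set.ncard_union_eq hd1 (hS.subset Set.inter_subset_left)
          ((Set.finite_singleton o).union hS'fin),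
        Set.ncard_union_eq hd2 (Set.finite_singleton o) hS'fin, hcount, Set.ncard_singleton]
      omega
    have hS'ne : S'.Nonempty := by
      rw [Set.nonempty_iff_ne_empty]
      intro h
      rw [h, Set.ncard_empty] at hcard
      omega
    refine ⟨sInf S', (Nat.sInf_mem hS'ne).1, ?_⟩
    have heq : S ∩ Set.Iio (sInf S') = insert o (S ∩ Set.Iio o) := by
      ext s
      simp only [Set.mem_inter_iff, Set.mem_Iio, Set.mem_insert_iff]
      constructor
      · rintro ⟨hs, hlt⟩
        rcases lt_trichotomy s o with h | h | h
        · exact Or.inr ⟨hs, h⟩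
        · exact Or.inl h
        · exfalso
          have : s ∈ S' := ⟨hs, h⟩
          exact absurd hlt (not_lt.mpr (Nat.sInf_le this))
      · have hoS' : o < sInf S' := (Nat.sInf_mem hS'ne).2
        rintro (rfl | ⟨hs, hlt⟩)
        · exact ⟨ho, hoS'⟩
        · exact ⟨hs, lt_trans hlt hoS'⟩
    rw [heq, Set.ncard_insert_of_notMem (by simp) (hS.subset Set.inter_subset_left), hcount]


section step1
variable {n : ℕ} {w : ℕ → Bool} {M : Set (ℕ × ℕ)} {o : ℕ}

lemma stub_mem {n w M o} (ho : o ∈ stubs n w M) :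
    1 ≤ o ∧ o ≤ n ∧ w o = false ∧ ∀ e ∈ M, e.1 ≠ o := ho

lemma ins_pm (hw : w (n+1) = true) (h : PM n w M) (ho : o ∈ stubs n w M) :
    PM (n+1) w (insert (o, n+1) M) := by
  obtain ⟨h1, h2, h3, h4⟩ := h
  obtain ⟨o1, o2, o3, o4⟩ := ho
  have hnotr : ∀ e ∈ M, e.2 ≠ o := by
    intro e he hee
    have := (h3 o o1 o2).2 ⟨e, he, hee⟩
    rw [o3] at this
    exact Bool.false_ne_true this
  constructor
  · rintro e (rfl | he)
    · exact ⟨o1, by omega, le_refl _⟩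
    · obtain ⟨a1, a2, a3⟩ := h1 e he
      exact ⟨a1, a2, by omega⟩
  refine ⟨?_, ?_, ?_⟩
  · rintro e (rfl | he) e' (rfl | he') hne
    · exact absurd rfl hne
    · obtain ⟨b1, b2, b3⟩ := h1 e' he'
      refine ⟨Ne.symm (o4 e' he'), Ne.symm (hnotr e' he'), by simp only; omega, by simp only; omega⟩
    · obtain ⟨b1, b2, b3⟩ := h1 e he
      refine ⟨o4 e he, by simp only; omega, hnotr e he, by simp only; omega⟩
    · exact h2 e he e' he' hne
  · intro i hi1 hi2
    rcases Nat.lt_or_ge i (n+1) with hlt | hge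
    · rw [h3 i hi1 (by omega)]
      constructor
      · rintro ⟨e, he, h2⟩; exact ⟨e, Set.mem_insert_of_mem _ he, h2⟩
      · rintro ⟨e, (rfl | he), h2⟩
        · simp at h2; omega
        · exact ⟨e, he, h2⟩
    · have : i = n+1 := by omega
      subst this
      rw [hw]
      simp only [true_iff]
      exact ⟨(o, n+1), Set.mem_insert _ _, rfl⟩
  · rintro e (rfl | he)
    · exact o3
    · exact h4 e he

lemma ins_stubs (hw : w (n+1) = true) (h : PM n w M) (ho : o ∈ stubs n w M) :
    stubs (n+1) w (insert (o, n+1) M) = stubs n w M \ {o} := by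
  ext i
  simp only [stubs, Set.mem_setOf_eq, Set.mem_diff, Set.mem_singleton_iff]
  constructor
  · rintro ⟨a1, a2, a3, a4⟩
    have hio : i ≠ o := by
      intro hc
      exact (a4 (o, n+1) (Set.mem_insert _ _)) (by simpa using hc.symm)
    have hin : i ≤ n := by
      rcases Nat.lt_or_ge i (n+1) with hlt | hge
      · omega
      · exfalso
        have : i = n + 1 := by omega
        subst this
        rw [hw] at a3
        simp at a3
    exact ⟨⟨a1, hin, a3, fun e he => a4 e (Set.mem_insert_of_mem _ he)⟩, hio⟩
  · rintro ⟨⟨a1, a2, a3, a4⟩, hio⟩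
    refine ⟨a1, by omega, a3, ?_⟩
    rintro e (rfl | he)
    · simpa using fun hc => hio hc.symm
    · exact a4 e he

lemma ins_flag : ∀ s, flag (insert (o, n+1) M) s ↔ flag M s ∨ s < o := by
  intro s
  constructor
  · rintro ⟨e, (rfl | he), hlt⟩
    · simp at hlt; exact Or.inr hlt
    · exact Or.inl ⟨e, he, hlt⟩
  · rintro (⟨e, he, hlt⟩ | hlt)
    · exact ⟨e, Set.mem_insert_of_mem _ he, hlt⟩
    · exact ⟨(o, n+1), Set.mem_insert _ _, hlt⟩

lemma ins_sA_flag (hw : w (n+1) = true) (h : PM n w M) (ho : o ∈ stubs n w M)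
    (hf : flag M o) :
    sA n w M = sA (n+1) w (insert (o, n+1) M) + 1 ∧
    sB n w M = sB (n+1) w (insert (o, n+1) M) := by
  have hstubs := ins_stubs (o := o) hw h ho
  have key1 : stubs (n+1) w (insert (o, n+1) M) ∩ {s | flag (insert (o, n+1) M) s}
      = (stubs n w M ∩ {s | flag M s}) \ {o} := by
    ext s
    rw [hstubs]
    simp only [Set.mem_inter_iff, Set.mem_diff, Set.mem_singleton_iff, Set.mem_setOf_eq, ins_flag]
    constructor
    · rintro ⟨⟨hs, hso⟩, (hfs | hlt)⟩
      · exact ⟨⟨hs, hfs⟩, hso⟩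
      · exact ⟨⟨hs, flag_antitone (le_of_lt hlt) hf⟩, hso⟩
    · rintro ⟨⟨hs, hfs⟩, hso⟩
      exact ⟨⟨hs, hso⟩, Or.inl hfs⟩
  have key2 : stubs (n+1) w (insert (o, n+1) M) ∩ {s | ¬ flag (insert (o, n+1) M) s}
      = stubs n w M ∩ {s | ¬ flag M s} := by
    ext s
    rw [hstubs]
    simp only [Set.mem_inter_iff, Set.mem_diff, Set.mem_singleton_iff, Set.mem_setOf_eq, ins_flag]
    constructor
    · rintro ⟨⟨hs, hso⟩, hnf⟩
      exact ⟨hs, fun hfs => hnf (Or.inl hfs)⟩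
    · rintro ⟨hs, hnf⟩
      have hso : s ≠ o := fun hc => hnf (hc ▸ hf)
      have hslt : ¬ s < o := fun hlt => hnf (flag_antitone (le_of_lt hlt) hf)
      exact ⟨⟨hs, hso⟩, fun hc => hc.elim hnf hslt⟩
  constructor
  · unfold sA
    rw [key1]
    have homem : o ∈ stubs n w M ∩ {s | flag M s} := ⟨ho, hf⟩
    rw [Set.ncard_diff_singleton_of_mem homem]
    have : 0 < (stubs n w M ∩ {s | flag M s}).ncard :=
      (Set.ncard_pos ((stubs_finite n w M).subset Set.inter_subset_left)).mpr ⟨o, homem⟩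
    omega
  · unfold sB
    rw [key2]

lemma ins_sAB_noflag (hw : w (n+1) = true) (h : PM n w M) (ho : o ∈ stubs n w M)
    (hf : ¬ flag M o) :
    sA (n+1) w (insert (o, n+1) M)
      = sA n w M + (stubs n w M ∩ {s | ¬ flag M s} ∩ Set.Iio o).ncard ∧
    sB n w M
      = sB (n+1) w (insert (o, n+1) M) + (stubs n w M ∩ {s | ¬ flag M s} ∩ Set.Iio o).ncard + 1 := by
  have hstubs := ins_stubs (o := o) hw h ho
  set S1 := stubs n w M ∩ {s | flag M s} with hS1
  set S0 := stubs n w M ∩ {s | ¬ flag M s} with hS0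
  have hfin : (stubs n w M).Finite := stubs_finite n w M
  have hS1fin : S1.Finite := hfin.subset Set.inter_subset_left
  have hS0fin : S0.Finite := hfin.subset Set.inter_subset_left
  have key1 : stubs (n+1) w (insert (o, n+1) M) ∩ {s | flag (insert (o, n+1) M) s}
      = S1 ∪ (S0 ∩ Set.Iio o) := by
    ext s
    rw [hstubs]
    simp only [Set.mem_inter_iff, Set.mem_diff, Set.mem_singleton_iff, Set.mem_setOf_eq,
      ins_flag, Set.mem_union, Set.mem_Iio, hS1, hS0]
    constructor
    · rintro ⟨⟨hs, hso⟩, (hfs | hlt)⟩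
      · exact Or.inl ⟨hs, hfs⟩
      · by_cases hfs : flag M s
        · exact Or.inl ⟨hs, hfs⟩
        · exact Or.inr ⟨⟨hs, hfs⟩, hlt⟩
    · rintro (⟨hs, hfs⟩ | ⟨⟨hs, hfs⟩, hlt⟩)
      · have hso : s ≠ o := fun hc => hf (hc ▸ hfs)
        exact ⟨⟨hs, hso⟩, Or.inl hfs⟩
      · exact ⟨⟨hs, by omega⟩, Or.inr hlt⟩
  have key2 : stubs (n+1) w (insert (o, n+1) M) ∩ {s | ¬ flag (insert (o, n+1) M) s}
      = S0 ∩ {s | o < s} := by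
    ext s
    rw [hstubs]
    simp only [Set.mem_inter_iff, Set.mem_diff, Set.mem_singleton_iff, Set.mem_setOf_eq,
      ins_flag, hS0]
    constructor
    · rintro ⟨⟨hs, hso⟩, hnf⟩
      push_neg at hnf
      exact ⟨⟨hs, hnf.1⟩, by omega⟩
    · rintro ⟨⟨hs, hfs⟩, hgt⟩
      exact ⟨⟨hs, by omega⟩, by push_neg; exact ⟨hfs, by omega⟩⟩
  have hdisj : Disjoint S1 (S0 ∩ Set.Iio o) := by
    rw [Set.disjoint_left]
    rintro s ⟨_, hfs⟩ ⟨⟨_, hnfs⟩, _⟩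
    exact hnfs hfs
  have hsplit0 : S0 = (S0 ∩ Set.Iio o) ∪ ({o} ∪ (S0 ∩ {s | o < s})) := by
    ext s
    simp only [Set.mem_union, Set.mem_inter_iff, Set.mem_Iio, Set.mem_singleton_iff,
      Set.mem_setOf_eq]
    constructor
    · intro hs
      rcases lt_trichotomy s o with hc | hc | hc
      · exact Or.inl ⟨hs, hc⟩
      · exact Or.inr (Or.inl hc)
      · exact Or.inr (Or.inr ⟨hs, hc⟩)
    · rintro (⟨hs, _⟩ | rfl | ⟨hs, _⟩)
      · exact hs
      · exact ⟨ho, hf⟩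
      · exact hs
  constructor
  · unfold sA
    rw [key1, Set.ncard_union_eq hdisj hS1fin (hS0fin.subset Set.inter_subset_left)]
  · unfold sB
    rw [key2]
    have hd1 : Disjoint (S0 ∩ Set.Iio o) ({o} ∪ (S0 ∩ {s | o < s})) := by
      rw [Set.disjoint_left]
      rintro s ⟨_, hs⟩ hmem
      rw [Set.mem_Iio] at hs
      rcases hmem with hc | ⟨_, hc⟩
      · rw [Set.mem_singleton_iff] at hc; omega
      · rw [Set.mem_setOf_eq] at hc; omega
    have hd2 : Disjoint ({o} : Set ℕ) (S0 ∩ {s | o < s}) := by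
      rw [Set.disjoint_left]
      rintro s rfl ⟨_, hc⟩
      rw [Set.mem_setOf_eq] at hc; omega
    calc S0.ncard = (S0 ∩ Set.Iio o).ncard + ({o} ∪ (S0 ∩ {s | o < s})).ncard := by
          rw [← Set.ncard_union_eq hd1 (hS0fin.subset Set.inter_subset_left)
            ((Set.finite_singleton o).union (hS0fin.subset Set.inter_subset_left)), ← hsplit0]
      _ = (S0 ∩ Set.Iio o).ncard + (1 + (S0 ∩ {s | o < s}).ncard) := by
          rw [Set.ncard_union_eq hd2 (Set.finite_singleton o)
            (hS0fin.subset Set.inter_subset_left), Set.ncard_singleton]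
      _ = (S0 ∩ {s | o < s}).ncard + (S0 ∩ Set.Iio o).ncard + 1 := by omega

/-! σ-specific insert lemmas -/

lemma ins_av321 (h : PM n w M) (ho : o ∈ stubs n w M) (hav : Av321 M)
    (hvi : Vi321 n w M) : Av321 (insert (o, n+1) M) := by
  rintro e1 he1 e2 he2 e3 he3 ⟨c1, c2, c3, c4⟩
  rw [Set.mem_insert_iff] at he1 he2 he3
  rcases he2 with rfl | he2
  · rcases he1 with rfl | he1
    · exact absurd c4 (by dsimp only; omega)
    · have := (h.1 e1 he1).2.2
      dsimp only at c4
      omega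
  · rcases he3 with rfl | he3
    · have := (h.1 e2 he2).2.2
      dsimp only at c3
      omega
    · rcases he1 with rfl | he1
      · dsimp only at c1
        exact hvi o ho e2 he2 e3 he3 ⟨c1, c2, c3⟩
      · exact hav e1 he1 e2 he2 e3 he3 ⟨c1, c2, c3, c4⟩

lemma ins_av231 (h : PM n w M) (ho : o ∈ stubs n w M) (hav : Av231 M)
    (hvi : Vi231 n w M) : Av231 (insert (o, n+1) M) := by
  rintro e1 he1 e2 he2 e3 he3 ⟨c1, c2, c3, c4⟩
  rw [Set.mem_insert_iff] at he1 he2 he3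
  rcases he1 with rfl | he1
  · rcases he2 with rfl | he2
    · exact absurd c1 (by dsimp only; omega)
    · have := (h.1 e2 he2).2.2
      dsimp only at c4
      omega
  · rcases he3 with rfl | he3
    · have := (h.1 e1 he1).2.2
      dsimp only at c3
      omega
    · rcases he2 with rfl | he2
      · dsimp only at c2 c4
        exact hvi o ho e1 he1 e3 he3 ⟨c1, c2, c3⟩
      · exact hav e1 he1 e2 he2 e3 he3 ⟨c1, c2, c3, c4⟩

lemma ins_vi321 (hw : w (n+1) = true) (h : PM n w M) (ho : o ∈ stubs n w M)
    (hvi : Vi321 n w M) (hleg : flag M o → ∀ s ∈ stubs n w M, ¬ s < o) :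
    Vi321 (n+1) w (insert (o, n+1) M) := by
  intro s hs e he e' he'
  rw [ins_stubs hw h ho] at hs
  rintro ⟨c1, c2, c3⟩
  rcases he with rfl | he
  · rcases he' with rfl | he'
    · simp only at c2; omega
    · -- e = (o,n+1) outermost : s < o < e'.1, e'.2 < n+1 : flag M o holds
      simp only at c1 c2 c3
      exact hleg ⟨e', he', c2⟩ s hs.1 c1
  · rcases he' with rfl | he'
    · simp only at c3
      have := (h.1 e he).2.2; omega
    · exact hvi s hs.1 e he e' he' ⟨c1, c2, c3⟩

lemma ins_vi231 (hw : w (n+1) = true) (h : PM n w M) (ho : o ∈ stubs n w M)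
    (hvi : Vi231 n w M) (hleg : ∀ s ∈ stubs n w M, o < s → ¬ flag M s) :
    Vi231 (n+1) w (insert (o, n+1) M) := by
  intro s hs e he e' he'
  rw [ins_stubs hw h ho] at hs
  rintro ⟨c1, c2, c3⟩
  rcases he with rfl | he
  · rcases he' with rfl | he'
    · simp only at c1 c2; omega
    · -- e = (o,n+1) as left edge: o < s < e'.1
      simp only at c1 c3
      exact hleg s hs.1 c1 ⟨e', he', c2⟩
  · rcases he' with rfl | he'
    · simp only at c3
      have := (h.1 e he).2.2; omega
    · exact hvi s hs.1 e he e' he' ⟨c1, c2, c3⟩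

/-! backward: from the (n+1)-level properties derive the n-level ones plus legality. -/

lemma back_vi321 (hw : w (n+1) = true) (h : PM n w M) (ho : o ∈ stubs n w M)
    (hav : Av321 (insert (o, n+1) M)) (hvi : Vi321 (n+1) w (insert (o, n+1) M)) :
    Av321 M ∧ Vi321 n w M ∧ (flag M o → ∀ s ∈ stubs n w M, ¬ s < o) := by
  have hstubs := ins_stubs (o := o) hw h ho
  refine ⟨?_, ?_, ?_⟩
  · intro e1 he1 e2 he2 e3 he3
    exact hav e1 (Set.mem_insert_of_mem _ he1) e2 (Set.mem_insert_of_mem _ he2)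
      e3 (Set.mem_insert_of_mem _ he3)
  · intro s hs e he e' he'
    rintro ⟨c1, c2, c3⟩
    by_cases hso : s = o
    · subst hso
      exact hav (s, n+1) (Set.mem_insert _ _) e (Set.mem_insert_of_mem _ he)
        e' (Set.mem_insert_of_mem _ he')
        ⟨c1, c2, c3, by simpa using Nat.lt_succ_of_le (h.1 e he).2.2⟩
    · exact hvi s (by rw [hstubs]; exact ⟨hs, hso⟩) e (Set.mem_insert_of_mem _ he)
        e' (Set.mem_insert_of_mem _ he') ⟨c1, c2, c3⟩
  · rintro ⟨e, he, hoe⟩ s hs hso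
    have hsne : s ≠ o := by omega
    exact hvi s (by rw [hstubs]; exact ⟨hs, hsne⟩) (o, n+1) (Set.mem_insert _ _)
      e (Set.mem_insert_of_mem _ he)
      ⟨hso, hoe, by simpa using Nat.lt_succ_of_le (h.1 e he).2.2⟩

lemma back_vi231 (hw : w (n+1) = true) (h : PM n w M) (ho : o ∈ stubs n w M)
    (hav : Av231 (insert (o, n+1) M)) (hvi : Vi231 (n+1) w (insert (o, n+1) M)) :
    Av231 M ∧ Vi231 n w M ∧ (∀ s ∈ stubs n w M, o < s → ¬ flag M s) := by
  have hstubs := ins_stubs (o := o) hw h ho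
  refine ⟨?_, ?_, ?_⟩
  · intro e1 he1 e2 he2 e3 he3
    exact hav e1 (Set.mem_insert_of_mem _ he1) e2 (Set.mem_insert_of_mem _ he2)
      e3 (Set.mem_insert_of_mem _ he3)
  · intro s hs e he e' he'
    rintro ⟨c1, c2, c3⟩
    by_cases hso : s = o
    · subst hso
      exact hav e (Set.mem_insert_of_mem _ he) (s, n+1) (Set.mem_insert _ _)
        e' (Set.mem_insert_of_mem _ he')
        ⟨c1, c2, c3, by simpa using Nat.lt_succ_of_le (h.1 e he).2.2⟩
    · exact hvi s (by rw [hstubs]; exact ⟨hs, hso⟩) e (Set.mem_insert_of_mem _ he)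
        e' (Set.mem_insert_of_mem _ he') ⟨c1, c2, c3⟩
  · rintro s hs hso ⟨e, he, hse⟩
    have hsne : s ≠ o := by omega
    exact hvi s (by rw [hstubs]; exact ⟨hs, hsne⟩) (o, n+1) (Set.mem_insert _ _)
      e (Set.mem_insert_of_mem _ he)
      ⟨hso, hse, by simpa using Nat.lt_succ_of_le (h.1 e he).2.2⟩

/-! decomposition of an (n+1)-level matching, and canonical choice of `o` -/

open Classical in
noncomputable def nthElt (S : Set ℕ) (k : ℕ) : ℕ :=
  if h : ∃ o ∈ S, (S ∩ Set.Iio o).ncard = k then h.choose else 0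

lemma nthElt_spec {S : Set ℕ} (hS : S.Finite) {k : ℕ} (hk : k < S.ncard) :
    nthElt S k ∈ S ∧ (S ∩ Set.Iio (nthElt S k)).ncard = k := by
  have h := nth_exists hS hk
  rw [nthElt]
  rw [dif_pos h]
  exact ⟨h.choose_spec.1, h.choose_spec.2⟩

lemma remove_decomp (hw : w (n+1) = true) {M' : Set (ℕ × ℕ)} (h' : PM (n+1) w M') :
    ∃ o M, M' = insert (o, n+1) M ∧ PM n w M ∧ o ∈ stubs n w M := by
  obtain ⟨e0, he0, he02⟩ := (h'.2.2.1 (n+1) (by omega) (le_refl _)).1 hw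
  have he0eq : e0 = (e0.1, n+1) := by rw [← he02]
  refine ⟨e0.1, M' \ {e0}, ?_, ?_, ?_⟩
  · rw [← he0eq, Set.insert_diff_singleton, Set.insert_eq_self.mpr he0]
  · obtain ⟨h1, h2, h3, h4⟩ := h'
    refine ⟨?_, ?_, ?_, ?_⟩
    · rintro e ⟨he, hne⟩
      obtain ⟨a1, a2, a3⟩ := h1 e he
      have : e.2 ≠ n + 1 := by
        intro hc
        exact (h2 e he e0 he0 (by simpa using hne)).2.2.2 (by omega)
      exact ⟨a1, a2, by omega⟩
    · rintro e ⟨he, _⟩ e' ⟨he', _⟩ hne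
      exact h2 e he e' he' hne
    · intro i hi1 hi2
      rw [h3 i hi1 (by omega)]
      constructor
      · rintro ⟨e, he, hei⟩
        refine ⟨e, ⟨he, ?_⟩, hei⟩
        simp only [Set.mem_singleton_iff]
        intro hc
        subst hc
        omega
      · rintro ⟨e, ⟨he, _⟩, hei⟩
        exact ⟨e, he, hei⟩
    · rintro e ⟨he, _⟩
      exact h4 e he
  · have h1 := h'.1 e0 he0
    refine ⟨h1.1, by omega, h'.2.2.2 e0 he0, ?_⟩
    rintro e ⟨he, hne⟩ hc
    exact (h'.2.1 e he e0 he0 (by simpa using hne)).1 hc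

lemma ins_inj {N : Set (ℕ × ℕ)} {o' : ℕ} (h : PM n w M) (ho : o ∈ stubs n w M)
    (h' : PM n w N) (ho' : o' ∈ stubs n w N)
    (heq : insert (o, n+1) M = insert (o', n+1) N) : o = o' ∧ M = N := by
  have hnM : (o, n+1) ∉ M := fun hc => (h.1 (o, n+1) hc).2.2.not_gt (by omega)
  have hnN : (o', n+1) ∉ N := fun hc => (h'.1 (o', n+1) hc).2.2.not_gt (by omega)
  have hoo' : o = o' := by
    have : (o', n+1) ∈ insert (o, n+1) M := by rw [heq]; exact Set.mem_insert _ _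
    rcases this with hc | hc
    · exact (Prod.mk.injEq _ _ _ _ ▸ hc).1.symm ▸ rfl
    · exact absurd ((h.1 (o', n+1) hc).2.2) (by omega)
  subst hoo'
  refine ⟨rfl, ?_⟩
  have : insert (o, n+1) M \ {(o, n+1)} = insert (o, n+1) N \ {(o, n+1)} := by rw [heq]
  rwa [Set.insert_diff_self_of_notMem hnM, Set.insert_diff_self_of_notMem hnN] at this

/-! forward maps land correctly: σ = 321 -/

lemma fwdX_321 {a b : ℕ} (hw : w (n+1) = true) (hM : M ∈ A321 n w (a+1) b) :
    insert (sInf (stubs n w M), n+1) M ∈ A321 (n+1) w a b ∧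
    sInf (stubs n w M) ∈ stubs n w M ∧ flag M (sInf (stubs n w M)) := by
  obtain ⟨hpm, hav, hvi, hsa, hsb⟩ := hM
  have hS1ne : (stubs n w M ∩ {s | flag M s}).Nonempty := by
    rw [← Set.ncard_pos ((stubs_finite n w M).subset Set.inter_subset_left)]
    have h0 : (stubs n w M ∩ {s | flag M s}).ncard = a + 1 := hsa
    omega
  obtain ⟨s1, hs1⟩ := hS1ne
  have hne : (stubs n w M).Nonempty := ⟨s1, hs1.1⟩
  set o := sInf (stubs n w M) with hodef
  have ho : o ∈ stubs n w M := Nat.sInf_mem hne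
  have hf : flag M o := flag_antitone (Nat.sInf_le hs1.1) hs1.2
  have hleg : ∀ s ∈ stubs n w M, ¬ s < o := fun s hs => not_lt.mpr (Nat.sInf_le hs)
  obtain ⟨hc1, hc2⟩ := ins_sA_flag hw hpm ho hf
  refine ⟨⟨ins_pm hw hpm ho, ins_av321 hpm ho hav hvi,
    ins_vi321 hw hpm ho hvi (fun _ => hleg), by omega, by omega⟩, ho, hf⟩

lemma fwdK_321 {a b k : ℕ} (hw : w (n+1) = true) (hk : k ≤ a)
    (hM : M ∈ A321 n w (a-k) (b+k+1)) :
    insert (nthElt (stubs n w M ∩ {s | ¬ flag M s}) k, n+1) M ∈ A321 (n+1) w a b ∧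
    nthElt (stubs n w M ∩ {s | ¬ flag M s}) k ∈ stubs n w M ∧
    ¬ flag M (nthElt (stubs n w M ∩ {s | ¬ flag M s}) k) ∧
    ((stubs n w M ∩ {s | ¬ flag M s}) ∩
      Set.Iio (nthElt (stubs n w M ∩ {s | ¬ flag M s}) k)).ncard = k := by
  obtain ⟨hpm, hav, hvi, hsa, hsb⟩ := hM
  set S0 := stubs n w M ∩ {s | ¬ flag M s} with hS0def
  have hS0fin : S0.Finite := (stubs_finite n w M).subset Set.inter_subset_left
  have hkcard : k < S0.ncard := by
    have : S0.ncard = b + k + 1 := hsb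
    omega
  obtain ⟨hmem, hcount⟩ := nthElt_spec hS0fin hkcard
  set o := nthElt S0 k with hodef
  have ho : o ∈ stubs n w M := hmem.1
  have hf : ¬ flag M o := hmem.2
  have hcard := ins_sAB_noflag hw hpm ho hf
  rw [← hS0def, hcount] at hcard
  obtain ⟨hc1, hc2⟩ := hcard
  refine ⟨⟨ins_pm hw hpm ho, ins_av321 hpm ho hav hvi,
    ins_vi321 hw hpm ho hvi (fun hc => absurd hc hf), by omega, by omega⟩, ho, hf, hcount⟩

lemma surj_321 {a b : ℕ} (hw : w (n+1) = true) {M' : Set (ℕ × ℕ)}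
    (hM' : M' ∈ A321 (n+1) w a b) :
    (∃ M, M ∈ A321 n w (a+1) b ∧ M' = insert (sInf (stubs n w M), n+1) M) ∨
    (∃ k, k ≤ a ∧ ∃ M, M ∈ A321 n w (a-k) (b+k+1) ∧
      M' = insert (nthElt (stubs n w M ∩ {s | ¬ flag M s}) k, n+1) M) := by
  obtain ⟨hpm', hav', hvi', hsa', hsb'⟩ := hM'
  obtain ⟨o, M, rfl, hpm, ho⟩ := remove_decomp hw hpm'
  obtain ⟨hav, hvi, hleg⟩ := back_vi321 hw hpm ho hav' hvi'
  by_cases hf : flag M o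
  · left
    obtain ⟨hc1, hc2⟩ := ins_sA_flag hw hpm ho hf
    have hosInf : sInf (stubs n w M) = o := by
      have h1 : sInf (stubs n w M) ≤ o := Nat.sInf_le ho
      have h2 : ¬ sInf (stubs n w M) < o := hleg hf _ (Nat.sInf_mem ⟨o, ho⟩)
      omega
    exact ⟨M, ⟨hpm, hav, hvi, by omega, by omega⟩, by rw [hosInf]⟩
  · right
    set S0 := stubs n w M ∩ {s | ¬ flag M s} with hS0def
    have hS0fin : S0.Finite := (stubs_finite n w M).subset Set.inter_subset_left
    set j := (S0 ∩ Set.Iio o).ncard with hjdef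
    have hcard := ins_sAB_noflag hw hpm ho hf
    rw [← hS0def, ← hjdef] at hcard
    obtain ⟨hc1, hc2⟩ := hcard
    have hja : j ≤ a := by omega
    have hoS0 : o ∈ S0 := ⟨ho, hf⟩
    have hjcard : j < S0.ncard := by
      have hsub : S0 ∩ Set.Iio o ⊆ S0 \ {o} := by
        rintro s ⟨hs, hlt⟩
        rw [Set.mem_Iio] at hlt
        exact ⟨hs, by simp only [Set.mem_singleton_iff]; omega⟩
      have h1 : j ≤ (S0 \ {o}).ncard := Set.ncard_le_ncard hsub hS0fin.diff
      have h2 : (S0 \ {o}).ncard = S0.ncard - 1 := Set.ncard_diff_singleton_of_mem hoS0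
      have h3 : 0 < S0.ncard := (Set.ncard_pos hS0fin).mpr ⟨o, hoS0⟩
      omega
    obtain ⟨hmem, hcount⟩ := nthElt_spec hS0fin hjcard
    have honth : nthElt S0 j = o := nth_unique hS0fin hmem hoS0 (by rw [hcount])
    refine ⟨j, hja, M, ⟨hpm, hav, hvi, by omega, by omega⟩, by rw [honth]⟩

/-! forward maps land correctly: σ = 231 -/

lemma fwdX_231 {a b : ℕ} (hw : w (n+1) = true) (hM : M ∈ A231 n w (a+1) b) :
    insert (sSup (stubs n w M ∩ {s | flag M s}), n+1) M ∈ A231 (n+1) w a b ∧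
    sSup (stubs n w M ∩ {s | flag M s}) ∈ stubs n w M ∧
    flag M (sSup (stubs n w M ∩ {s | flag M s})) := by
  obtain ⟨hpm, hav, hvi, hsa, hsb⟩ := hM
  set S1 := stubs n w M ∩ {s | flag M s} with hS1def
  have hS1fin : S1.Finite := (stubs_finite n w M).subset Set.inter_subset_left
  have hS1ne : S1.Nonempty := by
    rw [← Set.ncard_pos hS1fin]
    have h0 : S1.ncard = a + 1 := hsa
    omega
  set o := sSup S1 with hodef
  have hoS1 : o ∈ S1 := Set.Nonempty.csSup_mem hS1ne hS1fin
  have ho : o ∈ stubs n w M := hoS1.1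
  have hf : flag M o := hoS1.2
  have hleg : ∀ s ∈ stubs n w M, o < s → ¬ flag M s := by
    intro s hs hlt hfs
    have : s ≤ o := le_csSup hS1fin.bddAbove ⟨hs, hfs⟩
    omega
  obtain ⟨hc1, hc2⟩ := ins_sA_flag hw hpm ho hf
  refine ⟨⟨ins_pm hw hpm ho, ins_av231 hpm ho hav hvi,
    ins_vi231 hw hpm ho hvi hleg, by omega, by omega⟩, ho, hf⟩

lemma fwdK_231 {a b k : ℕ} (hw : w (n+1) = true) (hk : k ≤ a)
    (hM : M ∈ A231 n w (a-k) (b+k+1)) :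
    insert (nthElt (stubs n w M ∩ {s | ¬ flag M s}) k, n+1) M ∈ A231 (n+1) w a b ∧
    nthElt (stubs n w M ∩ {s | ¬ flag M s}) k ∈ stubs n w M ∧
    ¬ flag M (nthElt (stubs n w M ∩ {s | ¬ flag M s}) k) ∧
    ((stubs n w M ∩ {s | ¬ flag M s}) ∩
      Set.Iio (nthElt (stubs n w M ∩ {s | ¬ flag M s}) k)).ncard = k := by
  obtain ⟨hpm, hav, hvi, hsa, hsb⟩ := hM
  set S0 := stubs n w M ∩ {s | ¬ flag M s} with hS0def
  have hS0fin : S0.Finite := (stubs_finite n w M).subset Set.inter_subset_left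
  have hkcard : k < S0.ncard := by
    have : S0.ncard = b + k + 1 := hsb
    omega
  obtain ⟨hmem, hcount⟩ := nthElt_spec hS0fin hkcard
  set o := nthElt S0 k with hodef
  have ho : o ∈ stubs n w M := hmem.1
  have hf : ¬ flag M o := hmem.2
  have hleg : ∀ s ∈ stubs n w M, o < s → ¬ flag M s := by
    intro s hs hlt hfs
    exact hf (flag_antitone (le_of_lt hlt) hfs)
  have hcard := ins_sAB_noflag hw hpm ho hf
  rw [← hS0def, hcount] at hcard
  obtain ⟨hc1, hc2⟩ := hcard
  refine ⟨⟨ins_pm hw hpm ho, ins_av231 hpm ho hav hvi,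
    ins_vi231 hw hpm ho hvi hleg, by omega, by omega⟩, ho, hf, hcount⟩

lemma surj_231 {a b : ℕ} (hw : w (n+1) = true) {M' : Set (ℕ × ℕ)}
    (hM' : M' ∈ A231 (n+1) w a b) :
    (∃ M, M ∈ A231 n w (a+1) b ∧
      M' = insert (sSup (stubs n w M ∩ {s | flag M s}), n+1) M) ∨
    (∃ k, k ≤ a ∧ ∃ M, M ∈ A231 n w (a-k) (b+k+1) ∧
      M' = insert (nthElt (stubs n w M ∩ {s | ¬ flag M s}) k, n+1) M) := by
  obtain ⟨hpm', hav', hvi', hsa', hsb'⟩ := hM'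
  obtain ⟨o, M, rfl, hpm, ho⟩ := remove_decomp hw hpm'
  obtain ⟨hav, hvi, hleg⟩ := back_vi231 hw hpm ho hav' hvi'
  by_cases hf : flag M o
  · left
    obtain ⟨hc1, hc2⟩ := ins_sA_flag hw hpm ho hf
    set S1 := stubs n w M ∩ {s | flag M s} with hS1def
    have hS1fin : S1.Finite := (stubs_finite n w M).subset Set.inter_subset_left
    have hosSup : sSup S1 = o := by
      have h1 : o ≤ sSup S1 := le_csSup hS1fin.bddAbove ⟨ho, hf⟩
      have h2 : sSup S1 ∈ S1 := Set.Nonempty.csSup_mem ⟨o, ho, hf⟩ hS1fin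
      have h3 : ¬ (o < sSup S1) := fun hc => hleg _ h2.1 hc h2.2
      omega
    exact ⟨M, ⟨hpm, hav, hvi, by omega, by omega⟩, by rw [hosSup]⟩
  · right
    set S0 := stubs n w M ∩ {s | ¬ flag M s} with hS0def
    have hS0fin : S0.Finite := (stubs_finite n w M).subset Set.inter_subset_left
    set j := (S0 ∩ Set.Iio o).ncard with hjdef
    have hcard := ins_sAB_noflag hw hpm ho hf
    rw [← hS0def, ← hjdef] at hcard
    obtain ⟨hc1, hc2⟩ := hcard
    have hja : j ≤ a := by omega
    have hoS0 : o ∈ S0 := ⟨ho, hf⟩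
    have hjcard : j < S0.ncard := by
      have hsub : S0 ∩ Set.Iio o ⊆ S0 \ {o} := by
        rintro s ⟨hs, hlt⟩
        rw [Set.mem_Iio] at hlt
        exact ⟨hs, by simp only [Set.mem_singleton_iff]; omega⟩
      have h1 : j ≤ (S0 \ {o}).ncard := Set.ncard_le_ncard hsub hS0fin.diff
      have h2 : (S0 \ {o}).ncard = S0.ncard - 1 := Set.ncard_diff_singleton_of_mem hoS0
      have h3 : 0 < S0.ncard := (Set.ncard_pos hS0fin).mpr ⟨o, hoS0⟩
      omega
    obtain ⟨hmem, hcount⟩ := nthElt_spec hS0fin hjcard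
    have honth : nthElt S0 j = o := nth_unique hS0fin hmem hoS0 (by rw [hcount])
    refine ⟨j, hja, M, ⟨hpm, hav, hvi, by omega, by omega⟩, by rw [honth]⟩

lemma A321_finite' (n w a b) : (A321 n w a b).Finite := by
  apply Set.Finite.subset (Set.Finite.finite_subsets
    (((Set.finite_Icc 1 n).prod (Set.finite_Icc 1 n))))
  intro M hM e he
  obtain ⟨h1, h2, h3⟩ := hM.1.1 e he
  exact ⟨⟨h1, le_of_lt (lt_of_lt_of_le h2 h3)⟩, ⟨le_trans h1 (le_of_lt h2), h3⟩⟩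

lemma step1_321 {a b : ℕ} (hw : w (n+1) = true) :
    Nat.card ↥(A321 (n+1) w a b) =
    Nat.card ↥(A321 n w (a+1) b) +
      ∑ k ∈ Finset.range (a+1), Nat.card ↥(A321 n w (a-k) (b+k+1)) := by
  classical
  haveI h1 : Finite ↥(A321 n w (a+1) b) := (A321_finite' n w (a+1) b).to_subtype
  haveI h2 : ∀ k : Fin (a+1), Finite ↥(A321 n w (a-(k:ℕ)) (b+(k:ℕ)+1)) :=
    fun k => (A321_finite' n w _ _).to_subtype
  set T := (↥(A321 n w (a+1) b) ⊕ ((k : Fin (a+1)) × ↥(A321 n w (a-(k:ℕ)) (b+(k:ℕ)+1))))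
    with hT
  let g1 : ↥(A321 n w (a+1) b) → ↥(A321 (n+1) w a b) :=
    fun M => ⟨_, (fwdX_321 hw M.2).1⟩
  let g2 : ((k : Fin (a+1)) × ↥(A321 n w (a-(k:ℕ)) (b+(k:ℕ)+1))) → ↥(A321 (n+1) w a b) :=
    fun p => ⟨_, (fwdK_321 hw (Nat.lt_succ_iff.mp p.1.2) p.2.2).1⟩
  let f : T → ↥(A321 (n+1) w a b) := Sum.elim g1 g2
  have hinj : Function.Injective f := by
    rintro (⟨M1, hM1⟩ | ⟨k1, M1, hM1⟩) (⟨M2, hM2⟩ | ⟨k2, M2, hM2⟩) heq <;>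
      have hval := congrArg Subtype.val heq
    · obtain ⟨ho, hM⟩ := ins_inj hM1.1 (fwdX_321 hw hM1).2.1 hM2.1 (fwdX_321 hw hM2).2.1 hval
      exact congrArg Sum.inl (Subtype.ext hM)
    · obtain ⟨ho, hM⟩ := ins_inj hM1.1 (fwdX_321 hw hM1).2.1 hM2.1
        (fwdK_321 hw (Nat.lt_succ_iff.mp k2.2) hM2).2.1 hval
      have hfl := (fwdX_321 hw hM1).2.2
      have hnfl := (fwdK_321 hw (Nat.lt_succ_iff.mp k2.2) hM2).2.2.1
      rw [ho, hM] at hfl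
      exact absurd hfl hnfl
    · obtain ⟨ho, hM⟩ := ins_inj hM1.1 (fwdK_321 hw (Nat.lt_succ_iff.mp k1.2) hM1).2.1 hM2.1
        (fwdX_321 hw hM2).2.1 hval
      have hfl := (fwdX_321 hw hM2).2.2
      have hnfl := (fwdK_321 hw (Nat.lt_succ_iff.mp k1.2) hM1).2.2.1
      rw [← ho, ← hM] at hfl
      exact absurd hfl hnfl
    · obtain ⟨ho, hM⟩ := ins_inj hM1.1 (fwdK_321 hw (Nat.lt_succ_iff.mp k1.2) hM1).2.1 hM2.1
        (fwdK_321 hw (Nat.lt_succ_iff.mp k2.2) hM2).2.1 hval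
      have hc1 := (fwdK_321 hw (Nat.lt_succ_iff.mp k1.2) hM1).2.2.2
      have hc2 := (fwdK_321 hw (Nat.lt_succ_iff.mp k2.2) hM2).2.2.2
      subst hM
      rw [ho] at hc1
      have hk : k1 = k2 := Fin.ext (hc1.symm.trans hc2)
      subst hk
      rfl
  have hsurj : Function.Surjective f := by
    rintro ⟨M', hM'⟩
    rcases surj_321 hw hM' with ⟨M, hMmem, hMeq⟩ | ⟨k, hk, M, hMmem, hMeq⟩
    · exact ⟨Sum.inl ⟨M, hMmem⟩, Subtype.ext hMeq.symm⟩
    · exact ⟨Sum.inr ⟨⟨k, Nat.lt_succ_of_le hk⟩, ⟨M, hMmem⟩⟩, Subtype.ext hMeq.symm⟩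
  have hcard := Nat.card_eq_of_bijective f ⟨hinj, hsurj⟩
  rw [← hcard, hT, Nat.card_sum]
  congr 1
  haveI : ∀ k : Fin (a+1), Fintype ↥(A321 n w (a-(k:ℕ)) (b+(k:ℕ)+1)) :=
    fun k => Fintype.ofFinite _
  rw [Nat.card_eq_fintype_card, Fintype.card_sigma]
  rw [← Fin.sum_univ_eq_sum_range (fun k => Nat.card ↥(A321 n w (a-k) (b+k+1))) (a+1)]
  exact Finset.sum_congr rfl (fun k _ => (Nat.card_eq_fintype_card).symm)

lemma A231_finite' (n w a b) : (A231 n w a b).Finite := by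
  apply Set.Finite.subset (Set.Finite.finite_subsets
    (((Set.finite_Icc 1 n).prod (Set.finite_Icc 1 n))))
  intro M hM e he
  obtain ⟨h1, h2, h3⟩ := hM.1.1 e he
  exact ⟨⟨h1, le_of_lt (lt_of_lt_of_le h2 h3)⟩, ⟨le_trans h1 (le_of_lt h2), h3⟩⟩

lemma step1_231 {a b : ℕ} (hw : w (n+1) = true) :
    Nat.card ↥(A231 (n+1) w a b) =
    Nat.card ↥(A231 n w (a+1) b) +
      ∑ k ∈ Finset.range (a+1), Nat.card ↥(A231 n w (a-k) (b+k+1)) := by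
  classical
  haveI h1 : Finite ↥(A231 n w (a+1) b) := (A231_finite' n w (a+1) b).to_subtype
  haveI h2 : ∀ k : Fin (a+1), Finite ↥(A231 n w (a-(k:ℕ)) (b+(k:ℕ)+1)) :=
    fun k => (A231_finite' n w _ _).to_subtype
  set T := (↥(A231 n w (a+1) b) ⊕ ((k : Fin (a+1)) × ↥(A231 n w (a-(k:ℕ)) (b+(k:ℕ)+1))))
    with hT
  let g1 : ↥(A231 n w (a+1) b) → ↥(A231 (n+1) w a b) :=
    fun M => ⟨_, (fwdX_231 hw M.2).1⟩
  let g2 : ((k : Fin (a+1)) × ↥(A231 n w (a-(k:ℕ)) (b+(k:ℕ)+1))) → ↥(A231 (n+1) w a b) :=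
    fun p => ⟨_, (fwdK_231 hw (Nat.lt_succ_iff.mp p.1.2) p.2.2).1⟩
  let f : T → ↥(A231 (n+1) w a b) := Sum.elim g1 g2
  have hinj : Function.Injective f := by
    rintro (⟨M1, hM1⟩ | ⟨k1, M1, hM1⟩) (⟨M2, hM2⟩ | ⟨k2, M2, hM2⟩) heq <;>
      have hval := congrArg Subtype.val heq
    · obtain ⟨ho, hM⟩ := ins_inj hM1.1 (fwdX_231 hw hM1).2.1 hM2.1 (fwdX_231 hw hM2).2.1 hval
      exact congrArg Sum.inl (Subtype.ext hM)
    · obtain ⟨ho, hM⟩ := ins_inj hM1.1 (fwdX_231 hw hM1).2.1 hM2.1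
        (fwdK_231 hw (Nat.lt_succ_iff.mp k2.2) hM2).2.1 hval
      have hfl := (fwdX_231 hw hM1).2.2
      have hnfl := (fwdK_231 hw (Nat.lt_succ_iff.mp k2.2) hM2).2.2.1
      rw [ho, hM] at hfl
      exact absurd hfl hnfl
    · obtain ⟨ho, hM⟩ := ins_inj hM1.1 (fwdK_231 hw (Nat.lt_succ_iff.mp k1.2) hM1).2.1 hM2.1
        (fwdX_231 hw hM2).2.1 hval
      have hfl := (fwdX_231 hw hM2).2.2
      have hnfl := (fwdK_231 hw (Nat.lt_succ_iff.mp k1.2) hM1).2.2.1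
      rw [← ho, ← hM] at hfl
      exact absurd hfl hnfl
    · obtain ⟨ho, hM⟩ := ins_inj hM1.1 (fwdK_231 hw (Nat.lt_succ_iff.mp k1.2) hM1).2.1 hM2.1
        (fwdK_231 hw (Nat.lt_succ_iff.mp k2.2) hM2).2.1 hval
      have hc1 := (fwdK_231 hw (Nat.lt_succ_iff.mp k1.2) hM1).2.2.2
      have hc2 := (fwdK_231 hw (Nat.lt_succ_iff.mp k2.2) hM2).2.2.2
      subst hM
      rw [ho] at hc1
      have hk : k1 = k2 := Fin.ext (hc1.symm.trans hc2)
      subst hk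
      rfl
  have hsurj : Function.Surjective f := by
    rintro ⟨M', hM'⟩
    rcases surj_231 hw hM' with ⟨M, hMmem, hMeq⟩ | ⟨k, hk, M, hMmem, hMeq⟩
    · exact ⟨Sum.inl ⟨M, hMmem⟩, Subtype.ext hMeq.symm⟩
    · exact ⟨Sum.inr ⟨⟨k, Nat.lt_succ_of_le hk⟩, ⟨M, hMmem⟩⟩, Subtype.ext hMeq.symm⟩
  have hcard := Nat.card_eq_of_bijective f ⟨hinj, hsurj⟩
  rw [← hcard, hT, Nat.card_sum]
  congr 1
  haveI : ∀ k : Fin (a+1), Fintype ↥(A231 n w (a-(k:ℕ)) (b+(k:ℕ)+1)) :=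
    fun k => Fintype.ofFinite _
  rw [Nat.card_eq_fintype_card, Fintype.card_sigma]
  rw [← Fin.sum_univ_eq_sum_range (fun k => Nat.card ↥(A231 n w (a-k) (b+k+1))) (a+1)]
  exact Finset.sum_congr rfl (fun k _ => (Nat.card_eq_fintype_card).symm)

end step1
theorem AA_eq (n : ℕ) : ∀ (w : ℕ → Bool) (a b : ℕ),
    Nat.card ↥(A321 n w a b) = Nat.card ↥(A231 n w a b) := by
  induction n with
  | zero => intro w a b; rw [base_eq]
  | succ n ih =>
    intro w a b
    cases hwn : w (n+1) with
    | false =>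
      cases b with
      | zero => simp only [step0_zero_321 hwn, step0_zero_231 hwn]
      | succ b =>
        rw [step0_321 hwn, step0_231 hwn]
        exact ih w a b
    | true =>
      rw [step1_321 hwn, step1_231 hwn, ih w (a+1) b]
      congr 1
      exact Finset.sum_congr rfl fun k _ => ih w (a-k) (b+k+1)

/-! ## Translation between graphs and edge sets -/

def MG (G : SimpleGraph ℕ) : Set (ℕ × ℕ) := {p | p.1 < p.2 ∧ G.Adj p.1 p.2}

lemma adj_iff_MG {G : SimpleGraph ℕ} {u v : ℕ} :
    G.Adj u v ↔ ((u, v) ∈ MG G ∨ (v, u) ∈ MG G) := by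
  constructor
  · intro h
    rcases lt_trichotomy u v with hlt | rfl | hlt
    · exact Or.inl ⟨hlt, h⟩
    · exact absurd h (G.loopless.irrefl u)
    · exact Or.inr ⟨hlt, h.symm⟩
  · rintro (⟨_, h⟩ | ⟨_, h⟩)
    · exact h
    · exact h.symm

lemma MG_PM {n : ℕ} {w : ℕ → Bool} {G : SimpleGraph ℕ}
    (hG : IsMatchingOn n G) (hB : HasBase n G w) : PM n w (MG G) := by
  obtain ⟨hbd, huniq⟩ := hG
  have hup : ∀ v u u' : ℕ, G.Adj v u → G.Adj v u' → u = u' := by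
    intro v u u' h1 h2
    obtain ⟨x, hx, hxu⟩ := huniq v (hbd v u h1).1 (hbd v u h1).2.1
    rw [hxu u h1, hxu u' h2]
  refine ⟨?_, ?_, ?_, ?_⟩
  · rintro e ⟨hlt, hadj⟩
    obtain ⟨a1, a2, a3, a4⟩ := hbd _ _ hadj
    exact ⟨a1, hlt, a4⟩
  · rintro e ⟨hlt, hadj⟩ e' ⟨hlt', hadj'⟩ hne
    refine ⟨?_, ?_, ?_, ?_⟩
    · intro hc
      apply hne
      have := hup e.1 e.2 e'.2 hadj (hc ▸ hadj')
      exact Prod.ext hc this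
    · intro hc
      have := hup e.1 e.2 e'.1 hadj (by rw [hc]; exact hadj'.symm)
      omega
    · intro hc
      have := hup e.2 e.1 e'.2 hadj.symm (by rw [hc]; exact hadj')
      omega
    · intro hc
      apply hne
      have := hup e.2 e.1 e'.1 hadj.symm (hc ▸ hadj'.symm)
      exact Prod.ext this hc
  · intro i hi1 hi2
    rw [hB i hi1 hi2]
    constructor
    · rintro ⟨j, hj, hadj⟩
      exact ⟨(j, i), ⟨hj, hadj.symm⟩, rfl⟩
    · rintro ⟨e, ⟨hlt, hadj⟩, rfl⟩
      exact ⟨e.1, hlt, hadj.symm⟩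
  · rintro e ⟨hlt, hadj⟩
    by_contra hc
    have hw : w e.1 = true := by
      cases hweq : w e.1
      · exact absurd hweq hc
      · rfl
    obtain ⟨a1, a2, _, _⟩ := hbd _ _ hadj
    obtain ⟨j, hj, hadj'⟩ := (hB e.1 a1 a2).1 hw
    have := hup e.1 e.2 j hadj hadj'
    omega

lemma MG_stubs {n : ℕ} {w : ℕ → Bool} {G : SimpleGraph ℕ}
    (hG : IsMatchingOn n G) (hB : HasBase n G w) : stubs n w (MG G) = ∅ := by
  ext i
  simp only [stubs, Set.mem_setOf_eq, Set.mem_empty_iff_false, iff_false, not_and]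
  intro hi1 hi2 hwi hnol
  obtain ⟨u, hu, _⟩ := hG.2 i hi1 hi2
  have hne := hu.ne'
  rcases lt_trichotomy u i with hlt | rfl | hlt
  · have : w i = true := (hB i hi1 hi2).2 ⟨u, hlt, hu⟩
    rw [hwi] at this
    exact Bool.false_ne_true this
  · exact hne rfl
  · exact hnol (i, u) ⟨hlt, hu⟩ rfl

/-! monotone embedding of the six pattern vertices -/

def emb6 (v1 v2 v3 v4 v5 v6 : ℕ) : ℕ → ℕ := fun i =>
  if i = 1 then v1 else if i = 2 then v2 else if i = 3 then v3 else if i = 4 then v4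
  else if i = 5 then v5 else if i = 6 then v6 else if i = 0 then v1 - 1 else v6 + i

lemma emb6_strictMono {v1 v2 v3 v4 v5 v6 : ℕ} (h0 : 1 ≤ v1) (h12 : v1 < v2) (h23 : v2 < v3)
    (h34 : v3 < v4) (h45 : v4 < v5) (h56 : v5 < v6) :
    StrictMono (emb6 v1 v2 v3 v4 v5 v6) := by
  apply strictMono_nat_of_lt_succ
  intro i
  match i with
  | 0 => simp only [emb6]; norm_num; omega
  | 1 => simp only [emb6]; norm_num; omega
  | 2 => simp only [emb6]; norm_num; omega
  | 3 => simp only [emb6]; norm_num; omega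
  | 4 => simp only [emb6]; norm_num; omega
  | 5 => simp only [emb6]; norm_num; omega
  | 6 => simp only [emb6]; norm_num
  | (i + 7) =>
    have e1 : emb6 v1 v2 v3 v4 v5 v6 (i + 7) = v6 + (i + 7) := by
      unfold emb6
      rw [if_neg (by omega), if_neg (by omega), if_neg (by omega), if_neg (by omega),
        if_neg (by omega), if_neg (by omega), if_neg (by omega)]
    have e2 : emb6 v1 v2 v3 v4 v5 v6 (i + 8) = v6 + (i + 8) := by
      unfold emb6
      rw [if_neg (by omega), if_neg (by omega), if_neg (by omega), if_neg (by omega),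
        if_neg (by omega), if_neg (by omega), if_neg (by omega)]
    rw [show i + 7 + 1 = i + 8 by omega, e1, e2]
    omega

lemma emb6_eval (v1 v2 v3 v4 v5 v6 : ℕ) :
    emb6 v1 v2 v3 v4 v5 v6 1 = v1 ∧ emb6 v1 v2 v3 v4 v5 v6 2 = v2 ∧
    emb6 v1 v2 v3 v4 v5 v6 3 = v3 ∧ emb6 v1 v2 v3 v4 v5 v6 4 = v4 ∧
    emb6 v1 v2 v3 v4 v5 v6 5 = v5 ∧ emb6 v1 v2 v3 v4 v5 v6 6 = v6 := by
  refine ⟨rfl, rfl, rfl, rfl, rfl, rfl⟩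

lemma M231_adj_cases {u v : ℕ} (h : M231.Adj u v) :
    (u = 1 ∧ v = 5) ∨ (u = 2 ∧ v = 6) ∨ (u = 3 ∧ v = 4) ∨
    (u = 5 ∧ v = 1) ∨ (u = 6 ∧ v = 2) ∨ (u = 4 ∧ v = 3) := by
  rw [M231, SimpleGraph.fromRel_adj] at h
  obtain ⟨-, h⟩ := h
  simp only [List.mem_cons, List.mem_singleton, List.not_mem_nil, or_false,
    Prod.mk.injEq] at h
  tauto

lemma M321_adj_cases {u v : ℕ} (h : M321.Adj u v) :
    (u = 1 ∧ v = 6) ∨ (u = 2 ∧ v = 5) ∨ (u = 3 ∧ v = 4) ∨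
    (u = 6 ∧ v = 1) ∨ (u = 5 ∧ v = 2) ∨ (u = 4 ∧ v = 3) := by
  rw [M321, SimpleGraph.fromRel_adj] at h
  obtain ⟨-, h⟩ := h
  simp only [List.mem_cons, List.mem_singleton, List.not_mem_nil, or_false,
    Prod.mk.injEq] at h
  tauto

lemma M231_adj15 : M231.Adj 1 5 := by
  rw [M231, SimpleGraph.fromRel_adj]
  refine ⟨by norm_num, Or.inl (by simp)⟩
lemma M231_adj26 : M231.Adj 2 6 := by
  rw [M231, SimpleGraph.fromRel_adj]
  refine ⟨by norm_num, Or.inl (by simp)⟩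
lemma M231_adj34 : M231.Adj 3 4 := by
  rw [M231, SimpleGraph.fromRel_adj]
  refine ⟨by norm_num, Or.inl (by simp)⟩
lemma M321_adj16 : M321.Adj 1 6 := by
  rw [M321, SimpleGraph.fromRel_adj]
  refine ⟨by norm_num, Or.inl (by simp)⟩
lemma M321_adj25 : M321.Adj 2 5 := by
  rw [M321, SimpleGraph.fromRel_adj]
  refine ⟨by norm_num, Or.inl (by simp)⟩
lemma M321_adj34 : M321.Adj 3 4 := by
  rw [M321, SimpleGraph.fromRel_adj]
  refine ⟨by norm_num, Or.inl (by simp)⟩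

lemma contains231_of_pattern {n : ℕ} {G : SimpleGraph ℕ} (hG : IsMatchingOn n G)
    {e1 e2 e3 : ℕ × ℕ} (he1 : e1 ∈ MG G) (he2 : e2 ∈ MG G) (he3 : e3 ∈ MG G)
    (hp : e1.1 < e2.1 ∧ e2.1 < e3.1 ∧ e3.2 < e1.2 ∧ e1.2 < e2.2) :
    ContainsPat G M231 := by
  obtain ⟨p1, p2, p3, p4⟩ := hp
  have hb1 : 1 ≤ e1.1 := (hG.1 _ _ he1.2).1
  have h33 : e3.1 < e3.2 := he3.1
  set f := emb6 e1.1 e2.1 e3.1 e3.2 e1.2 e2.2 with hf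
  have hmono : StrictMono f := emb6_strictMono hb1 p1 p2 h33 p3 p4
  refine ⟨f, hmono, ?_⟩
  intro u v huv
  have hev := emb6_eval e1.1 e2.1 e3.1 e3.2 e1.2 e2.2
  obtain ⟨q1, q2, q3, q4, q5, q6⟩ := hev
  rcases M231_adj_cases huv with ⟨rfl, rfl⟩ | ⟨rfl, rfl⟩ | ⟨rfl, rfl⟩ |
    ⟨rfl, rfl⟩ | ⟨rfl, rfl⟩ | ⟨rfl, rfl⟩
  · rw [hf, q1, q5]; exact he1.2
  · rw [hf, q2, q6]; exact he2.2
  · rw [hf, q3, q4]; exact he3.2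
  · rw [hf, q1, q5]; exact he1.2.symm
  · rw [hf, q2, q6]; exact he2.2.symm
  · rw [hf, q3, q4]; exact he3.2.symm

lemma contains321_of_pattern {n : ℕ} {G : SimpleGraph ℕ} (hG : IsMatchingOn n G)
    {e1 e2 e3 : ℕ × ℕ} (he1 : e1 ∈ MG G) (he2 : e2 ∈ MG G) (he3 : e3 ∈ MG G)
    (hp : e1.1 < e2.1 ∧ e2.1 < e3.1 ∧ e3.2 < e2.2 ∧ e2.2 < e1.2) :
    ContainsPat G M321 := by
  obtain ⟨p1, p2, p3, p4⟩ := hp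
  have hb1 : 1 ≤ e1.1 := (hG.1 _ _ he1.2).1
  have h33 : e3.1 < e3.2 := he3.1
  set f := emb6 e1.1 e2.1 e3.1 e3.2 e2.2 e1.2 with hf
  have hmono : StrictMono f := emb6_strictMono hb1 p1 p2 h33 p3 p4
  refine ⟨f, hmono, ?_⟩
  intro u v huv
  obtain ⟨q1, q2, q3, q4, q5, q6⟩ := emb6_eval e1.1 e2.1 e3.1 e3.2 e2.2 e1.2
  rcases M321_adj_cases huv with ⟨rfl, rfl⟩ | ⟨rfl, rfl⟩ | ⟨rfl, rfl⟩ |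
    ⟨rfl, rfl⟩ | ⟨rfl, rfl⟩ | ⟨rfl, rfl⟩
  · rw [hf, q1, q6]; exact he1.2
  · rw [hf, q2, q5]; exact he2.2
  · rw [hf, q3, q4]; exact he3.2
  · rw [hf, q1, q6]; exact he1.2.symm
  · rw [hf, q2, q5]; exact he2.2.symm
  · rw [hf, q3, q4]; exact he3.2.symm

lemma contains231_to_npattern {G : SimpleGraph ℕ} (h : ContainsPat G M231) :
    ¬ Av231 (MG G) := by
  obtain ⟨f, hmono, hmap⟩ := h
  intro hav
  exact hav (f 1, f 5) ⟨hmono (by norm_num), hmap 1 5 M231_adj15⟩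
    (f 2, f 6) ⟨hmono (by norm_num), hmap 2 6 M231_adj26⟩
    (f 3, f 4) ⟨hmono (by norm_num), hmap 3 4 M231_adj34⟩
    ⟨hmono (by norm_num), hmono (by norm_num), hmono (by norm_num), hmono (by norm_num)⟩

lemma contains321_to_npattern {G : SimpleGraph ℕ} (h : ContainsPat G M321) :
    ¬ Av321 (MG G) := by
  obtain ⟨f, hmono, hmap⟩ := h
  intro hav
  exact hav (f 1, f 6) ⟨hmono (by norm_num), hmap 1 6 M321_adj16⟩
    (f 2, f 5) ⟨hmono (by norm_num), hmap 2 5 M321_adj25⟩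
    (f 3, f 4) ⟨hmono (by norm_num), hmap 3 4 M321_adj34⟩
    ⟨hmono (by norm_num), hmono (by norm_num), hmono (by norm_num), hmono (by norm_num)⟩

/-! graph from edge set -/

def GF (M : Set (ℕ × ℕ)) : SimpleGraph ℕ :=
  SimpleGraph.fromRel (fun u v => (u, v) ∈ M)

lemma GF_adj {M : Set (ℕ × ℕ)} {u v : ℕ} :
    (GF M).Adj u v ↔ u ≠ v ∧ ((u, v) ∈ M ∨ (v, u) ∈ M) := by
  rw [GF, SimpleGraph.fromRel_adj]

lemma GF_matching {n : ℕ} {w : ℕ → Bool} {M : Set (ℕ × ℕ)}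
    (hpm : PM n w M) (hstubs : stubs n w M = ∅) : IsMatchingOn n (GF M) := by
  obtain ⟨h1, h2, h3, h4⟩ := hpm
  constructor
  · intro u v hadj
    rw [GF_adj] at hadj
    rcases hadj.2 with hm | hm
    · obtain ⟨a1, a2, a3⟩ := h1 _ hm
      exact ⟨a1, by omega, by omega, a3⟩
    · obtain ⟨a1, a2, a3⟩ := h1 _ hm
      exact ⟨by omega, a3, a1, by omega⟩
  · intro v hv1 hv2
    cases hwv : w v with
    | true =>
      obtain ⟨e, he, he2⟩ := (h3 v hv1 hv2).1 hwv
      have helt := (h1 e he).2.1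
      have hpe : (e.1, v) = e := by rw [← he2]
      refine ⟨e.1, ?_, ?_⟩
      · show (GF M).Adj v e.1
        rw [GF_adj]
        exact ⟨by omega, Or.inr (by rw [hpe]; exact he)⟩
      · intro u hu
        show u = e.1
        rw [GF_adj] at hu
        rcases hu.2 with hm | hm
        · exfalso
          have hv : w v = false := h4 _ hm
          rw [hv] at hwv
          exact Bool.false_ne_true hwv
        · by_contra hne
          have hmm : (u, v) ≠ e := fun hc => hne (by rw [← hc])
          have := (h2 _ hm e he hmm).2.2.2
          simp only at this
          omega
    | false =>
      have hnstub : v ∉ stubs n w M := by rw [hstubs]; exact Set.notMem_empty v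
      have hex : ∃ e ∈ M, e.1 = v := by
        by_contra hc
        push_neg at hc
        exact hnstub ⟨hv1, hv2, hwv, fun e he => hc e he⟩
      obtain ⟨e, he, he1⟩ := hex
      have helt := (h1 e he).2.1
      have hpe : (v, e.2) = e := by rw [← he1]
      refine ⟨e.2, ?_, ?_⟩
      · show (GF M).Adj v e.2
        rw [GF_adj]
        exact ⟨by omega, Or.inl (by rw [hpe]; exact he)⟩
      · intro u hu
        show u = e.2
        rw [GF_adj] at hu
        rcases hu.2 with hm | hm
        · by_contra hne
          have hmm : (v, u) ≠ e := fun hc => hne (by rw [← hc])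
          have := (h2 _ hm e he hmm).1
          simp only at this
          omega
        · exfalso
          have : w v = true := (h3 v hv1 hv2).2 ⟨(u, v), hm, rfl⟩
          rw [hwv] at this
          exact Bool.false_ne_true this

lemma GF_base {n : ℕ} {w : ℕ → Bool} {M : Set (ℕ × ℕ)}
    (hpm : PM n w M) : HasBase n (GF M) w := by
  obtain ⟨h1, h2, h3, h4⟩ := hpm
  intro i hi1 hi2
  rw [h3 i hi1 hi2]
  constructor
  · rintro ⟨e, he, he2⟩
    have helt := (h1 e he).2.1
    have hpe : (e.1, i) = e := by rw [← he2]
    refine ⟨e.1, by omega, ?_⟩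
    rw [GF_adj]
    exact ⟨by omega, Or.inr (by rw [hpe]; exact he)⟩
  · rintro ⟨j, hj, hadj⟩
    rw [GF_adj] at hadj
    rcases hadj.2 with hm | hm
    · have := (h1 _ hm).2.1
      simp only at this
      omega
    · exact ⟨(j, i), hm, rfl⟩

lemma GF_MG {n : ℕ} {w : ℕ → Bool} {M : Set (ℕ × ℕ)} (hpm : PM n w M) :
    MG (GF M) = M := by
  ext p
  simp only [MG, Set.mem_setOf_eq, GF_adj]
  constructor
  · rintro ⟨hlt, _, (hm | hm)⟩
    · exact hm
    · have := (hpm.1 _ hm).2.1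
      simp only at this
      omega
  · intro hp
    have := (hpm.1 _ hp).2.1
    exact ⟨this, by omega, Or.inl hp⟩

lemma stubs_empty_of_zero {n : ℕ} {w : ℕ → Bool} {M : Set (ℕ × ℕ)}
    (ha : sA n w M = 0) (hb : sB n w M = 0) : stubs n w M = ∅ := by
  have hfin := stubs_finite n w M
  have h1 : stubs n w M ∩ {o | flag M o} = ∅ :=
    (Set.ncard_eq_zero (hfin.subset Set.inter_subset_left)).mp ha
  have h2 : stubs n w M ∩ {o | ¬ flag M o} = ∅ :=
    (Set.ncard_eq_zero (hfin.subset Set.inter_subset_left)).mp hb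
  rw [Set.eq_empty_iff_forall_notMem] at h1 h2 ⊢
  intro s hs
  by_cases hf : flag M s
  · exact h1 s ⟨hs, hf⟩
  · exact h2 s ⟨hs, hf⟩

lemma stubs_sAB_zero {n : ℕ} {w : ℕ → Bool} {M : Set (ℕ × ℕ)}
    (h : stubs n w M = ∅) : sA n w M = 0 ∧ sB n w M = 0 := by
  constructor
  · unfold sA; rw [h]; simp
  · unfold sB; rw [h]; simp

/-! final assembly -/

lemma mem_A231 {n : ℕ} {w : ℕ → Bool} {G : SimpleGraph ℕ} (hG : IsMatchingOn n G)
    (hB : HasBase n G w) (hnc : ¬ ContainsPat G M231) : MG G ∈ A231 n w 0 0 := by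
  have hst := MG_stubs hG hB
  have hav : Av231 (MG G) := by
    by_contra h
    unfold Av231 at h
    push_neg at h
    obtain ⟨e1, he1, e2, he2, e3, he3, hp⟩ := h
    exact hnc (contains231_of_pattern hG he1 he2 he3 hp)
  obtain ⟨ha, hb⟩ := stubs_sAB_zero hst
  refine ⟨MG_PM hG hB, hav, ?_, ha, hb⟩
  intro s hs
  rw [hst] at hs
  exact absurd hs (Set.notMem_empty s)

lemma mem_A321 {n : ℕ} {w : ℕ → Bool} {G : SimpleGraph ℕ} (hG : IsMatchingOn n G)
    (hB : HasBase n G w) (hnc : ¬ ContainsPat G M321) : MG G ∈ A321 n w 0 0 := by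
  have hst := MG_stubs hG hB
  have hav : Av321 (MG G) := by
    by_contra h
    unfold Av321 at h
    push_neg at h
    obtain ⟨e1, he1, e2, he2, e3, he3, hp⟩ := h
    exact hnc (contains321_of_pattern hG he1 he2 he3 hp)
  obtain ⟨ha, hb⟩ := stubs_sAB_zero hst
  refine ⟨MG_PM hG hB, hav, ?_, ha, hb⟩
  intro s hs
  rw [hst] at hs
  exact absurd hs (Set.notMem_empty s)

lemma card_graphs_231 (n : ℕ) (w : ℕ → Bool) :
    Nat.card {G : SimpleGraph ℕ // IsMatchingOn n G ∧ HasBase n G w ∧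
      ¬ ContainsPat G M231} = Nat.card ↥(A231 n w 0 0) := by
  apply Nat.card_eq_of_bijective
    (fun p => (⟨MG p.1, mem_A231 p.2.1 p.2.2.1 p.2.2.2⟩ : ↥(A231 n w 0 0)))
  constructor
  · rintro ⟨G, hG⟩ ⟨G', hG'⟩ heq
    have hMG : MG G = MG G' := congrArg Subtype.val heq
    apply Subtype.ext
    ext u v
    rw [adj_iff_MG, adj_iff_MG, hMG]
  · rintro ⟨M, hM⟩
    obtain ⟨hpm, hav, hvi, ha, hb⟩ := hM
    have hst : stubs n w M = ∅ := stubs_empty_of_zero ha hb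
    have hmg := GF_MG (w := w) hpm
    have hnc : ¬ ContainsPat (GF M) M231 := by
      intro hc
      have := contains231_to_npattern hc
      rw [hmg] at this
      exact this hav
    refine ⟨⟨GF M, GF_matching hpm hst, GF_base hpm, hnc⟩, ?_⟩
    exact Subtype.ext hmg

lemma card_graphs_321 (n : ℕ) (w : ℕ → Bool) :
    Nat.card {G : SimpleGraph ℕ // IsMatchingOn n G ∧ HasBase n G w ∧
      ¬ ContainsPat G M321} = Nat.card ↥(A321 n w 0 0) := by
  apply Nat.card_eq_of_bijective
    (fun p => (⟨MG p.1, mem_A321 p.2.1 p.2.2.1 p.2.2.2⟩ : ↥(A321 n w 0 0)))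
  constructor
  · rintro ⟨G, hG⟩ ⟨G', hG'⟩ heq
    have hMG : MG G = MG G' := congrArg Subtype.val heq
    apply Subtype.ext
    ext u v
    rw [adj_iff_MG, adj_iff_MG, hMG]
  · rintro ⟨M, hM⟩
    obtain ⟨hpm, hav, hvi, ha, hb⟩ := hM
    have hst : stubs n w M = ∅ := stubs_empty_of_zero ha hb
    have hmg := GF_MG (w := w) hpm
    have hnc : ¬ ContainsPat (GF M) M321 := by
      intro hc
      have := contains321_to_npattern hc
      rw [hmg] at this
      exact this hav
    refine ⟨⟨GF M, GF_matching hpm hst, GF_base hpm, hnc⟩, ?_⟩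
    exact Subtype.ext hmg

end S19


/-- `g(m,w,M_231) = g(m,w,M_321)` for every positive `m` and
Dyck word `w` of length `2m`. -/
theorem stmt19 (m : ℕ) (hm : 0 < m) (w : ℕ → Bool) (hw : IsDyckWord (2*m) w) :
    Nat.card {G : SimpleGraph ℕ // IsMatchingOn (2*m) G ∧ HasBase (2*m) G w ∧
      ¬ ContainsPat G M231} =
    Nat.card {G : SimpleGraph ℕ // IsMatchingOn (2*m) G ∧ HasBase (2*m) G w ∧
      ¬ ContainsPat G M321} := by
  rw [S19.card_graphs_231 (2*m) w, S19.card_graphs_321 (2*m) w]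
  exact (S19.AA_eq (2*m) w 0 0).symm
end
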